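/- arXiv:2105.15009 — 7 statements merged into one kernel-verified Lean document; each statement's English description precedes it below -/
import Mathlib

section
/- Let A be a real symmetric 2p×2p matrix and J the standard complex structure on ℝ^{2p}. If the spectrum of JA is contained in the imaginary axis iℝ, then the number of negative eigenvalues of the restriction of the quadratic form ⟨A·,·⟩ to the generalized kernel ker((JA)^{2p}) is congruent modulo 2 to the number of negative eigenvalues of A (counted with multiplicity). -/
set_option linter.unusedSectionVars false
set_option maxHeartbeats 1000000

open Matrix

/-- The Morse index (number of negative eigenvalues counted with multiplicity) of a real
symmetric matrix, characterized as the maximal dimension of a subspace on which the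
associated quadratic form is negative definite. -/
noncomputable def negIdx {ι : Type*} [Fintype ι] (A : Matrix ι ι ℝ) : ℕ :=
  sSup {d | ∃ W : Submodule ℝ (ι → ℝ), Module.finrank ℝ W = d ∧
    ∀ x ∈ W, x ≠ 0 → x ⬝ᵥ A.mulVec x < 0}

/-- The Morse index of the restriction of the quadratic form of `A` to a subspace `V`. -/
noncomputable def negIdxOn {ι : Type*} [Fintype ι] (A : Matrix ι ι ℝ)
    (V : Submodule ℝ (ι → ℝ)) : ℕ :=
  sSup {d | ∃ W : Submodule ℝ (ι → ℝ), W ≤ V ∧ Module.finrank ℝ W = d ∧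
    ∀ x ∈ W, x ≠ 0 → x ⬝ᵥ A.mulVec x < 0}

namespace MorseAux

open Module Submodule Polynomial

/-! ### Polynomial and determinant positivity -/

lemma monic_no_root_pos {q : ℝ[X]} (hm : q.Monic) (h : ∀ t : ℝ, q.eval t ≠ 0) (t : ℝ) :
    0 < q.eval t := by
  rcases eq_or_ne q.natDegree 0 with h0 | h0
  · rw [Polynomial.eq_one_of_monic_natDegree_zero hm h0]; simp
  · have hdeg : 0 < q.degree := natDegree_pos_iff_degree_pos.mp (Nat.pos_of_ne_zero h0)
    have htt := tendsto_atTop_of_leadingCoeff_nonneg q hdeg (by rw [hm.leadingCoeff]; norm_num)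
    obtain ⟨T₀, hT₀⟩ := Filter.eventually_atTop.mp (htt.eventually_ge_atTop 1)
    have h1 : (1:ℝ) ≤ q.eval (max t T₀) := hT₀ _ (le_max_right _ _)
    by_contra hle
    have hlt : q.eval t < 0 := lt_of_le_of_ne (not_lt.mp hle) (h t)
    have h0mem : (0:ℝ) ∈ Set.Icc (q.eval t) (q.eval (max t T₀)) := ⟨hlt.le, by linarith⟩
    obtain ⟨c, _, hc⟩ := intermediate_value_Icc (le_max_left t T₀)
      (q.continuous_aeval).continuousOn h0mem
    exact h c hc

lemma eval_charpoly' {m : Type*} [Fintype m] [DecidableEq m] (M : Matrix m m ℝ) (t : ℝ) :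
    M.charpoly.eval t = (t • (1 : Matrix m m ℝ) - M).det := by
  rw [Matrix.charpoly, ← Polynomial.coe_evalRingHom, RingHom.map_det]
  congr 1
  ext i j
  by_cases h : i = j
  · subst h; simp [Matrix.charmatrix_apply_eq, Matrix.one_apply]
  · simp [Matrix.charmatrix_apply_ne _ _ _ h, Matrix.one_apply, h]

/-- A real matrix with no real eigenvalues (including `0`) has positive determinant. -/
lemma det_pos_of_no_real_eigen {m : Type*} [Fintype m] [DecidableEq m] (M : Matrix m m ℝ)
    (h : ∀ (t : ℝ) (v : m → ℝ), M.mulVec v = t • v → v = 0) : 0 < M.det := by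
  have key : ∀ t : ℝ, ((-M).charpoly).eval t ≠ 0 := by
    intro t ht
    rw [eval_charpoly'] at ht
    obtain ⟨v, hv0, hv⟩ := Matrix.exists_mulVec_eq_zero_iff.mpr ht
    apply hv0
    apply h (-t) v
    rw [Matrix.sub_mulVec, Matrix.smul_mulVec, Matrix.one_mulVec, Matrix.neg_mulVec,
      sub_neg_eq_add] at hv
    have : M.mulVec v = -(t • v) := by
      have := congrArg (fun w => w - t • v) hv
      simpa [add_sub_cancel_left] using this
    rw [this, neg_smul]
  have := monic_no_root_pos ((-M).charpoly_monic) key 0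
  rw [eval_charpoly'] at this
  simpa using this

lemma even_card_neg_of_prod_pos {m : Type*} [Fintype m] [DecidableEq m] {d : m → ℝ}
    (h : 0 < ∏ i, d i) :
    Even (Finset.univ.filter fun i => d i < 0).card := by
  classical
  have hne : ∀ i, d i ≠ 0 := by
    intro i hi
    rw [Finset.prod_eq_zero (Finset.mem_univ i) hi] at h
    exact lt_irrefl _ h
  have hsplit := Finset.prod_filter_mul_prod_filter_not Finset.univ (fun i => d i < 0) d
  set s := Finset.univ.filter fun i => d i < 0 with hs
  set t := Finset.univ.filter fun i => ¬ d i < 0 with ht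
  have hpos_t : 0 < ∏ i ∈ t, d i :=
    Finset.prod_pos fun i hi =>
      lt_of_le_of_ne (not_lt.mp (Finset.mem_filter.mp hi).2) (Ne.symm (hne i))
  have hneg_s : ∏ i ∈ s, d i = (-1 : ℝ) ^ s.card * ∏ i ∈ s, (-d i) := by
    rw [← Finset.prod_const, ← Finset.prod_mul_distrib]
    exact Finset.prod_congr rfl fun i _ => by ring
  have hpos_s : 0 < ∏ i ∈ s, (-d i) :=
    Finset.prod_pos fun i hi => neg_pos.mpr (Finset.mem_filter.mp hi).2
  have hsign : 0 < (-1 : ℝ) ^ s.card := by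
    have h1 : 0 < ((-1 : ℝ) ^ s.card * ∏ i ∈ s, (-d i)) * ∏ i ∈ t, d i := by
      rw [← hneg_s, hsplit]; exact h
    by_contra hc
    push_neg at hc
    nlinarith [mul_pos hpos_s hpos_t]
  rcases Nat.even_or_odd s.card with he | ho
  · exact he
  · rw [ho.neg_one_pow] at hsign; norm_num at hsign

/-! ### Morse index combinatorics -/

section General
variable {ι : Type*} [Fintype ι] [DecidableEq ι]

def NegOn (A : Matrix ι ι ℝ) (W : Submodule ℝ (ι → ℝ)) : Prop :=
  ∀ x ∈ W, x ≠ 0 → x ⬝ᵥ A.mulVec x < 0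

def PosOn (A : Matrix ι ι ℝ) (W : Submodule ℝ (ι → ℝ)) : Prop :=
  ∀ x ∈ W, 0 ≤ x ⬝ᵥ A.mulVec x

lemma negSet_nonempty (A : Matrix ι ι ℝ) (V : Submodule ℝ (ι → ℝ)) :
    {d | ∃ W : Submodule ℝ (ι → ℝ), W ≤ V ∧ Module.finrank ℝ W = d ∧ NegOn A W}.Nonempty :=
  ⟨0, ⊥, bot_le, finrank_bot ℝ _, fun x hx hne => absurd (by simpa using hx) hne⟩

lemma negSet_bdd (A : Matrix ι ι ℝ) (V : Submodule ℝ (ι → ℝ)) :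
    BddAbove {d | ∃ W : Submodule ℝ (ι → ℝ), W ≤ V ∧ Module.finrank ℝ W = d ∧ NegOn A W} :=
  ⟨Module.finrank ℝ (ι → ℝ), fun _ ⟨W, _, hW, _⟩ => hW ▸ W.finrank_le⟩

lemma le_negIdxOn {A : Matrix ι ι ℝ} {V W : Submodule ℝ (ι → ℝ)} (hWV : W ≤ V)
    (h : NegOn A W) : Module.finrank ℝ W ≤ negIdxOn A V :=
  le_csSup (negSet_bdd A V) ⟨W, hWV, rfl, h⟩

lemma negIdxOn_le {A : Matrix ι ι ℝ} {V : Submodule ℝ (ι → ℝ)} {m : ℕ}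
    (h : ∀ W ≤ V, NegOn A W → Module.finrank ℝ W ≤ m) : negIdxOn A V ≤ m :=
  csSup_le (negSet_nonempty A V) (fun _ ⟨W, h1, h2, h3⟩ => h2 ▸ h W h1 h3)

lemma negIdx_eq_negIdxOn_top (A : Matrix ι ι ℝ) : negIdx A = negIdxOn A ⊤ := by
  unfold negIdx negIdxOn
  congr 1
  ext d
  exact ⟨fun ⟨W, h1, h2⟩ => ⟨W, le_top, h1, h2⟩, fun ⟨W, _, h1, h2⟩ => ⟨W, h1, h2⟩⟩

lemma disjoint_neg_pos {A : Matrix ι ι ℝ} {N P : Submodule ℝ (ι → ℝ)}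
    (hN : NegOn A N) (hP : PosOn A P) : N ⊓ P = ⊥ := by
  rw [eq_bot_iff]
  rintro x ⟨hxN, hxP⟩
  by_contra hx
  have hne : x ≠ 0 := fun h => hx (h ▸ Submodule.zero_mem ⊥)
  exact absurd (hP x hxP) (not_le.mpr (hN x hxN hne))

lemma dot_flip (N : Matrix ι ι ℝ) (x y : ι → ℝ) :
    x ⬝ᵥ N.mulVec y = y ⬝ᵥ Nᵀ.mulVec x := by
  rw [Matrix.dotProduct_mulVec, Matrix.mulVec_transpose, dotProduct_comm]

lemma dot_symm {A : Matrix ι ι ℝ} (hA : A.IsSymm) (x y : ι → ℝ) :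
    x ⬝ᵥ A.mulVec y = y ⬝ᵥ A.mulVec x := by
  rw [dot_flip, hA.eq]

lemma sum_smul_dotProduct {κ : Type*} [Fintype κ] (f : κ → ℝ) (v : κ → ι → ℝ) (w : ι → ℝ) :
    (∑ i, f i • v i) ⬝ᵥ w = ∑ i, f i * (v i ⬝ᵥ w) := by
  simp only [dotProduct, Finset.sum_apply, Pi.smul_apply, smul_eq_mul, Finset.sum_mul,
    Finset.mul_sum, mul_assoc]
  exact Finset.sum_comm

lemma dotProduct_sum_smul {κ : Type*} [Fintype κ] (f : κ → ℝ) (v : κ → ι → ℝ) (w : ι → ℝ) :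
    w ⬝ᵥ (∑ i, f i • v i) = ∑ i, f i * (w ⬝ᵥ v i) := by
  simp only [dotProduct, Finset.sum_apply, Pi.smul_apply, smul_eq_mul, Finset.sum_mul,
    Finset.mul_sum]
  rw [Finset.sum_comm]
  congr 1; ext k; congr 1; ext i; ring

lemma dotProduct_mulVec_sum_smul (A : Matrix ι ι ℝ) {κ : Type*} [Fintype κ]
    (f : κ → ℝ) (v : κ → ι → ℝ) (w : ι → ℝ) :
    w ⬝ᵥ A.mulVec (∑ i, f i • v i) = ∑ i, f i * (w ⬝ᵥ A.mulVec (v i)) := by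
  have hmv : A.mulVec (∑ i, f i • v i) = ∑ i, f i • A.mulVec (v i) := by
    rw [← A.mulVecLin_apply, map_sum]
    simp [Matrix.mulVecLin_apply]
  rw [hmv, dotProduct_sum_smul]

lemma q_sum (A : Matrix ι ι ℝ) {κ : Type*} [Fintype κ] [DecidableEq κ] (v : κ → ι → ℝ)
    (horth : ∀ i j, i ≠ j → v i ⬝ᵥ A.mulVec (v j) = 0) (f : κ → ℝ) :
    (∑ i, f i • v i) ⬝ᵥ A.mulVec (∑ i, f i • v i)
      = ∑ i, f i ^ 2 * (v i ⬝ᵥ A.mulVec (v i)) := by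
  have hmv : A.mulVec (∑ i, f i • v i) = ∑ i, f i • A.mulVec (v i) := by
    rw [← A.mulVecLin_apply, map_sum]
    simp [Matrix.mulVecLin_apply]
  rw [hmv, sum_smul_dotProduct]
  refine Finset.sum_congr rfl (fun i _ => ?_)
  rw [dotProduct_sum_smul, Finset.sum_eq_single i (fun j _ hji => ?_) (by simp)]
  · ring
  · rw [horth i j (Ne.symm hji), mul_zero]

lemma negOn_span (A : Matrix ι ι ℝ) {κ : Type*} [Fintype κ] [DecidableEq κ] (v : κ → ι → ℝ)
    (horth : ∀ i j, i ≠ j → v i ⬝ᵥ A.mulVec (v j) = 0)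
    (hneg : ∀ i, v i ⬝ᵥ A.mulVec (v i) < 0) :
    NegOn A (Submodule.span ℝ (Set.range v)) := by
  intro x hx hne
  obtain ⟨f, hf⟩ := (mem_span_range_iff_exists_fun ℝ).mp hx
  obtain ⟨i₀, hi₀⟩ : ∃ i, f i ≠ 0 := by
    by_contra h
    push_neg at h
    exact hne (by rw [← hf]; simp [h])
  rw [← hf, q_sum A v horth f]
  have : ∑ i, f i ^ 2 * (v i ⬝ᵥ A.mulVec (v i)) < ∑ _i : κ, (0:ℝ) := by
    apply Finset.sum_lt_sum
    · exact fun i _ => mul_nonpos_of_nonneg_of_nonpos (sq_nonneg _) (hneg i).le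
    · exact ⟨i₀, Finset.mem_univ _, mul_neg_of_pos_of_neg (by positivity) (hneg i₀)⟩
  simpa using this

lemma posOn_span (A : Matrix ι ι ℝ) {κ : Type*} [Fintype κ] [DecidableEq κ] (v : κ → ι → ℝ)
    (horth : ∀ i j, i ≠ j → v i ⬝ᵥ A.mulVec (v j) = 0)
    (hpos : ∀ i, 0 ≤ v i ⬝ᵥ A.mulVec (v i)) :
    PosOn A (Submodule.span ℝ (Set.range v)) := by
  intro x hx
  obtain ⟨f, hf⟩ := (mem_span_range_iff_exists_fun ℝ).mp hx
  rw [← hf, q_sum A v horth f]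
  exact Finset.sum_nonneg (fun i _ => mul_nonneg (sq_nonneg _) (hpos i))

lemma negIdxOn_eq_of_split {A : Matrix ι ι ℝ} {V N P : Submodule ℝ (ι → ℝ)}
    (hNV : N ≤ V) (hPV : P ≤ V) (hN : NegOn A N) (hP : PosOn A P)
    (hrank : Module.finrank ℝ N + Module.finrank ℝ P = Module.finrank ℝ V) :
    negIdxOn A V = Module.finrank ℝ N := by
  refine le_antisymm (negIdxOn_le fun W hWV hW => ?_) (le_negIdxOn hNV hN)
  have hdisj : W ⊓ P = ⊥ := disjoint_neg_pos hW hP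
  have h1 := Submodule.finrank_sup_add_finrank_inf_eq W P
  rw [hdisj, finrank_bot, add_zero] at h1
  have h2 : Module.finrank ℝ ↥(W ⊔ P) ≤ Module.finrank ℝ V :=
    Submodule.finrank_mono (sup_le hWV hPV)
  omega

lemma finrank_sup_of_disjoint {W₀ W₁ : Submodule ℝ (ι → ℝ)} (h : W₀ ⊓ W₁ = ⊥) :
    Module.finrank ℝ ↥(W₀ ⊔ W₁) = Module.finrank ℝ W₀ + Module.finrank ℝ W₁ := by
  have h1 := Submodule.finrank_sup_add_finrank_inf_eq W₀ W₁
  rw [h, finrank_bot, add_zero] at h1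
  exact h1

lemma negOn_sup {A : Matrix ι ι ℝ} (hA : A.IsSymm) {V₀ V₁ W₀ W₁ : Submodule ℝ (ι → ℝ)}
    (h0 : W₀ ≤ V₀) (h1 : W₁ ≤ V₁)
    (horth : ∀ x ∈ V₀, ∀ y ∈ V₁, x ⬝ᵥ A.mulVec y = 0)
    (hW₀ : NegOn A W₀) (hW₁ : NegOn A W₁) : NegOn A (W₀ ⊔ W₁) := by
  intro x hx hne
  obtain ⟨a, ha, b, hb, rfl⟩ := Submodule.mem_sup.mp hx
  have hab : a ⬝ᵥ A.mulVec b = 0 := horth a (h0 ha) b (h1 hb)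
  have hba : b ⬝ᵥ A.mulVec a = 0 := by rw [dot_symm hA]; exact hab
  have hexp : (a + b) ⬝ᵥ A.mulVec (a + b) = a ⬝ᵥ A.mulVec a + b ⬝ᵥ A.mulVec b := by
    rw [Matrix.mulVec_add, dotProduct_add, add_dotProduct,
      add_dotProduct, hab, hba]
    ring
  rw [hexp]
  rcases eq_or_ne a 0 with rfl | ha0
  · have hb0 : b ≠ 0 := by simpa using hne
    have := hW₁ b hb hb0
    simpa using this
  · have hQa := hW₀ a ha ha0
    rcases eq_or_ne b 0 with rfl | hb0
    · simpa using hQa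
    · have hQb := hW₁ b hb hb0; linarith

lemma posOn_sup {A : Matrix ι ι ℝ} (hA : A.IsSymm) {V₀ V₁ W₀ W₁ : Submodule ℝ (ι → ℝ)}
    (h0 : W₀ ≤ V₀) (h1 : W₁ ≤ V₁)
    (horth : ∀ x ∈ V₀, ∀ y ∈ V₁, x ⬝ᵥ A.mulVec y = 0)
    (hW₀ : PosOn A W₀) (hW₁ : PosOn A W₁) : PosOn A (W₀ ⊔ W₁) := by
  intro x hx
  obtain ⟨a, ha, b, hb, rfl⟩ := Submodule.mem_sup.mp hx
  have hab : a ⬝ᵥ A.mulVec b = 0 := horth a (h0 ha) b (h1 hb)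
  have hba : b ⬝ᵥ A.mulVec a = 0 := by rw [dot_symm hA]; exact hab
  have hexp : (a + b) ⬝ᵥ A.mulVec (a + b) = a ⬝ᵥ A.mulVec a + b ⬝ᵥ A.mulVec b := by
    rw [Matrix.mulVec_add, dotProduct_add, add_dotProduct,
      add_dotProduct, hab, hba]
    ring
  rw [hexp]
  exact add_nonneg (hW₀ a ha) (hW₁ b hb)

/-- The bilinear form of `A` restricted to a submodule `V`. -/
noncomputable def bilV (A : Matrix ι ι ℝ) (V : Submodule ℝ (ι → ℝ)) :
    LinearMap.BilinForm ℝ ↥V :=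
  LinearMap.mk₂ ℝ (fun x y => (x : ι → ℝ) ⬝ᵥ A.mulVec (y : ι → ℝ))
    (by intros; simp [add_dotProduct])
    (by intros; simp [smul_dotProduct])
    (by intros; simp [Matrix.mulVec_add, dotProduct_add])
    (by intros; simp [Matrix.mulVec_smul, dotProduct_smul])

lemma exists_orthobasis (A : Matrix ι ι ℝ) (hA : A.IsSymm) (V : Submodule ℝ (ι → ℝ)) :
    ∃ c : Basis (Fin (finrank ℝ ↥V)) ℝ ↥V,
      ∀ i j, i ≠ j → ((c i : ι → ℝ) ⬝ᵥ A.mulVec (c j : ι → ℝ)) = 0 := by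
  have hsymm : LinearMap.IsSymm (bilV A V) := LinearMap.isSymm_def.mpr fun x y => dot_symm hA _ _
  obtain ⟨c, hc⟩ := LinearMap.BilinForm.exists_orthogonal_basis hsymm
  exact ⟨c, fun i j hij => hc hij⟩

/-- Core construction: from an orthogonal basis of `V`, a split of `V` into a negative-definite
and a positive-semidefinite part. -/
lemma split_of_basis {A : Matrix ι ι ℝ} {V : Submodule ℝ (ι → ℝ)}
    (c : Basis (Fin (finrank ℝ ↥V)) ℝ ↥V)
    (horth : ∀ i j, i ≠ j → ((c i : ι → ℝ) ⬝ᵥ A.mulVec (c j : ι → ℝ)) = 0) :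
    ∃ N P : Submodule ℝ (ι → ℝ), N ≤ V ∧ P ≤ V ∧ NegOn A N ∧ PosOn A P ∧
      Module.finrank ℝ N + Module.finrank ℝ P = Module.finrank ℝ V ∧
      Module.finrank ℝ N
        = (Finset.univ.filter fun i => ((c i : ι → ℝ) ⬝ᵥ A.mulVec (c i : ι → ℝ)) < 0).card := by
  classical
  set d : Fin (finrank ℝ ↥V) → ℝ := fun i => ((c i : ι → ℝ) ⬝ᵥ A.mulVec (c i : ι → ℝ)) with hd
  set s : Finset (Fin (finrank ℝ ↥V)) := Finset.univ.filter (fun i => d i < 0) with hs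
  set t : Finset (Fin (finrank ℝ ↥V)) := Finset.univ.filter (fun i => ¬ d i < 0) with ht
  have hli : LinearIndependent ℝ (fun i => (c i : ι → ℝ)) :=
    (c.linearIndependent).map' V.subtype (Submodule.ker_subtype V)
  have hvN : LinearIndependent ℝ (fun i : {i // i ∈ s} => (c i.1 : ι → ℝ)) :=
    hli.comp Subtype.val Subtype.val_injective
  have hvP : LinearIndependent ℝ (fun i : {i // i ∈ t} => (c i.1 : ι → ℝ)) :=
    hli.comp Subtype.val Subtype.val_injective
  refine ⟨Submodule.span ℝ (Set.range (fun i : {i // i ∈ s} => (c i.1 : ι → ℝ))),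
    Submodule.span ℝ (Set.range (fun i : {i // i ∈ t} => (c i.1 : ι → ℝ))),
    ?_, ?_, ?_, ?_, ?_, ?_⟩
  · rw [Submodule.span_le]; rintro _ ⟨i, rfl⟩; exact SetLike.coe_mem _
  · rw [Submodule.span_le]; rintro _ ⟨i, rfl⟩; exact SetLike.coe_mem _
  · exact negOn_span A _ (fun i j hij => horth _ _ (fun h => hij (Subtype.ext h)))
      (fun i => (Finset.mem_filter.mp i.2).2)
  · exact posOn_span A _ (fun i j hij => horth _ _ (fun h => hij (Subtype.ext h)))
      (fun i => not_lt.mp (Finset.mem_filter.mp i.2).2)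
  · rw [finrank_span_eq_card hvN, finrank_span_eq_card hvP, Fintype.card_coe, Fintype.card_coe,
      hs, ht, Finset.card_filter_add_card_filter_not]
    simp
  · rw [finrank_span_eq_card hvN, Fintype.card_coe]

end General

end MorseAux

open MorseAux Module Submodule

/-- If `A` is real symmetric `2p × 2p` and the spectrum of `JA` is purely imaginary, then the
Morse index of the restriction of `⟨A·,·⟩` to the generalized kernel `ker (JA)^{2p}` is
congruent mod 2 to the Morse index of `A`. -/
theorem stmt0 (p : ℕ) (A : Matrix (Fin p ⊕ Fin p) (Fin p ⊕ Fin p) ℝ)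
    (hA : A.IsSymm)
    (J : Matrix (Fin p ⊕ Fin p) (Fin p ⊕ Fin p) ℝ)
    (hJ : J = Matrix.fromBlocks 0 (-1) 1 0)
    (hspec : ∀ μ ∈ spectrum ℂ ((J * A).map (algebraMap ℝ ℂ)), μ.re = 0) :
    negIdxOn A (LinearMap.ker (Matrix.toLin' ((J * A) ^ (2 * p)))) % 2
      = negIdx A % 2 := by
  classical
  have hcard : Module.finrank ℝ ((Fin p ⊕ Fin p) → ℝ) = 2 * p := by
    simp [Module.finrank_pi, two_mul]
  rcases Nat.eq_zero_or_pos p with hp | hp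
  · have hzero : ∀ V : Submodule ℝ ((Fin p ⊕ Fin p) → ℝ), negIdxOn A V = 0 := by
      intro V
      refine Nat.le_zero.mp (negIdxOn_le fun W _ _ => ?_)
      have := W.finrank_le
      rw [hcard] at this
      omega
    rw [negIdx_eq_negIdxOn_top, hzero, hzero]
  set S : Matrix (Fin p ⊕ Fin p) (Fin p ⊕ Fin p) ℝ := J * A with hSdef
  set f := Matrix.toLin' S with hfdef
  have hpow : ∀ k, Matrix.toLin' (S ^ k) = f ^ k := by
    intro k
    induction k with
    | zero => simp [pow_zero, Matrix.toLin'_one, Module.End.one_eq_id]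
    | succ n ih => rw [pow_succ, pow_succ, Matrix.toLin'_mul, ih, Module.End.mul_eq_comp]
  rw [hpow (2 * p)]
  set V₀ := LinearMap.ker (f ^ (2 * p)) with hV₀
  set V₁ := LinearMap.range (f ^ (2 * p)) with hV₁
  have hkerstab : LinearMap.ker (f ^ (4 * p)) = LinearMap.ker (f ^ (2 * p)) := by
    rw [Module.End.ker_pow_eq_ker_pow_finrank_of_le (by rw [hcard]; omega),
      Module.End.ker_pow_eq_ker_pow_finrank_of_le (le_of_eq hcard)]
  have hdisj : V₀ ⊓ V₁ = ⊥ := by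
    rw [eq_bot_iff]
    rintro x ⟨hx0, z, hz⟩
    have hz4 : (f ^ (4 * p)) z = 0 := by
      have h1 : (f ^ (2 * p)) ((f ^ (2 * p)) z) = 0 := by
        rw [hz]; exact hx0
      rw [show 4 * p = 2 * p + 2 * p by omega, pow_add, Module.End.mul_apply]
      exact h1
    have hzmem : z ∈ LinearMap.ker (f ^ (2 * p)) := hkerstab ▸ LinearMap.mem_ker.mpr hz4
    have : x = 0 := by rw [← hz]; exact LinearMap.mem_ker.mp hzmem
    simp [this]
  have hranksum : finrank ℝ ↥V₁ + finrank ℝ ↥V₀ = Module.finrank ℝ ((Fin p ⊕ Fin p) → ℝ) :=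
    LinearMap.finrank_range_add_finrank_ker (f ^ (2 * p))
  have hsup : V₀ ⊔ V₁ = ⊤ := by
    apply Submodule.eq_top_of_finrank_eq
    rw [finrank_sup_of_disjoint hdisj]
    omega
  -- transpose identities
  have hJT : Jᵀ = -J := by
    rw [hJ, Matrix.fromBlocks_transpose]
    simp [Matrix.fromBlocks_neg]
  have hSA : Sᵀ * A = -(A * S) := by
    rw [hSdef, Matrix.transpose_mul, hA.eq, hJT]
    noncomm_ring
  have hAS : (A * S)ᵀ = -(A * S) := by
    rw [Matrix.transpose_mul, hA.eq, hSA]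
  have hS2 : (S * S)ᵀ * A = A * (S * S) :=
    calc (S * S)ᵀ * A = Sᵀ * (Sᵀ * A) := by rw [Matrix.transpose_mul, Matrix.mul_assoc]
    _ = Sᵀ * -(A * S) := by rw [hSA]
    _ = -(Sᵀ * A * S) := by rw [Matrix.mul_neg, Matrix.mul_assoc]
    _ = -(-(A * S) * S) := by rw [hSA]
    _ = A * (S * S) := by rw [Matrix.neg_mul, neg_neg, Matrix.mul_assoc]
  have hT2 : ∀ k, ((S * S) ^ k)ᵀ * A = A * (S * S) ^ k := by
    intro k
    induction k with
    | zero => simp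
    | succ n ih =>
      calc ((S * S) ^ (n + 1))ᵀ * A = (S * S)ᵀ * (((S * S) ^ n)ᵀ * A) := by
            rw [pow_succ, Matrix.transpose_mul, Matrix.mul_assoc]
      _ = (S * S)ᵀ * A * (S * S) ^ n := by rw [ih, ← Matrix.mul_assoc]
      _ = A * ((S * S) * (S * S) ^ n) := by rw [hS2, Matrix.mul_assoc]
      _ = A * (S * S) ^ (n + 1) := by rw [← pow_succ']
  have hT : (S ^ (2 * p))ᵀ * A = A * S ^ (2 * p) := by
    have := hT2 p
    rwa [← pow_two, ← pow_mul] at this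
  -- translation between f-powers and matrix powers
  have happ : ∀ (k) (x : (Fin p ⊕ Fin p) → ℝ), (f ^ k) x = (S ^ k).mulVec x := by
    intro k x
    rw [← hpow, Matrix.toLin'_apply]
  -- orthogonality
  have horthm : ∀ x ∈ V₀, ∀ y ∈ V₁, x ⬝ᵥ A.mulVec y = 0 := by
    rintro x hx y ⟨z, rfl⟩
    have hx' : (S ^ (2 * p)).mulVec x = 0 := by
      rw [← happ]; exact LinearMap.mem_ker.mp hx
    rw [happ, Matrix.mulVec_mulVec, ← hT, Matrix.dotProduct_mulVec, ← Matrix.vecMul_vecMul,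
      Matrix.vecMul_transpose, hx']
    simp
  -- V₁ is f-invariant
  have hinv : ∀ x ∈ V₁, f x ∈ V₁ := by
    rintro x ⟨z, rfl⟩
    refine ⟨f z, ?_⟩
    calc (f ^ (2 * p)) (f z) = (f ^ (2 * p) * f) z := rfl
    _ = (f * f ^ (2 * p)) z := by rw [← pow_succ, ← pow_succ']
    _ = f ((f ^ (2 * p)) z) := rfl
  set Sres : ↥V₁ →ₗ[ℝ] ↥V₁ := f.restrict hinv with hSres
  have hker1 : ∀ y : (Fin p ⊕ Fin p) → ℝ, f y = 0 → y ∈ V₀ := by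
    intro y hy
    apply LinearMap.mem_ker.mpr
    rw [show 2 * p = (2 * p - 1) + 1 by omega, pow_succ, Module.End.mul_apply, hy, map_zero]
  -- orthogonal basis of V₁
  obtain ⟨c, hco⟩ := exists_orthobasis A hA V₁
  set S₁ := LinearMap.toMatrix c c Sres with hS₁
  set G : Matrix (Fin (finrank ℝ ↥V₁)) (Fin (finrank ℝ ↥V₁)) ℝ :=
    Matrix.of (fun i j => ((c i : (Fin p ⊕ Fin p) → ℝ) ⬝ᵥ A.mulVec (c j : _))) with hG
  have hcoesum : ∀ w : Fin (finrank ℝ ↥V₁) → ℝ,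
      ((∑ i, w i • c i : ↥V₁) : (Fin p ⊕ Fin p) → ℝ)
        = ∑ i, w i • ((c i : (Fin p ⊕ Fin p) → ℝ)) := by
    intro w
    simp
  have hGmul : ∀ (w : Fin (finrank ℝ ↥V₁) → ℝ) i,
      (G.mulVec w) i = (c i : _) ⬝ᵥ A.mulVec ((∑ j, w j • c j : ↥V₁) : _) := by
    intro w i
    rw [hcoesum, dotProduct_mulVec_sum_smul]
    simp only [Matrix.mulVec, dotProduct, hG, Matrix.of_apply]
    exact Finset.sum_congr rfl fun j _ => mul_comm _ _
  -- nondegeneracy of G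
  have hGinj : ∀ w, G.mulVec w = 0 → w = 0 := by
    intro w hw
    set y : ↥V₁ := ∑ j, w j • c j with hy
    have hyall : ∀ i, (c i : _) ⬝ᵥ A.mulVec (y : _) = 0 := by
      intro i
      rw [← hGmul w i, hw]
      rfl
    have hV₁y : ∀ u ∈ V₁, u ⬝ᵥ A.mulVec (y : _) = 0 := by
      intro u hu
      have hrepr : u = ((∑ i, (c.repr ⟨u, hu⟩) i • c i : ↥V₁) : _) := by
        rw [Basis.sum_repr c ⟨u, hu⟩]
      rw [hrepr, hcoesum, sum_smul_dotProduct]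
      simp [hyall]
    have hally : ∀ u, u ⬝ᵥ A.mulVec (y : _) = 0 := by
      intro u
      have hu : u ∈ V₀ ⊔ V₁ := by rw [hsup]; trivial
      obtain ⟨a, ha, b, hb, rfl⟩ := Submodule.mem_sup.mp hu
      rw [add_dotProduct, horthm a ha _ y.2, hV₁y b hb, add_zero]
    have hAy : A.mulVec (y : _) = 0 := by
      funext i
      have := hally (Pi.single i 1)
      rwa [single_dotProduct, one_mul] at this
    have hfy : f (y : (Fin p ⊕ Fin p) → ℝ) = 0 := by
      rw [hfdef, Matrix.toLin'_apply, hSdef, ← Matrix.mulVec_mulVec, hAy, Matrix.mulVec_zero]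
    have hymem : (y : (Fin p ⊕ Fin p) → ℝ) ∈ V₀ ⊓ V₁ := ⟨hker1 _ hfy, y.2⟩
    rw [hdisj] at hymem
    have hy0 : y = 0 := by
      apply Subtype.ext
      simpa using hymem
    have hrepr : ⇑(c.repr y) = w := by rw [hy]; exact c.repr_sum_self w
    rw [← hrepr, hy0, map_zero]
    rfl
  -- no real eigenvalues of S away from 0
  have hnoreal : ∀ t : ℝ, t ≠ 0 → ∀ x : (Fin p ⊕ Fin p) → ℝ, x ≠ 0 → S.mulVec x ≠ t • x := by
    intro t ht x hx hcontra
    have hdet : (t • (1 : Matrix (Fin p ⊕ Fin p) (Fin p ⊕ Fin p) ℝ) - S).det = 0 := by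
      apply Matrix.exists_mulVec_eq_zero_iff.mp
      refine ⟨x, hx, ?_⟩
      rw [Matrix.sub_mulVec, Matrix.smul_mulVec, Matrix.one_mulVec, hcontra, sub_self]
    have hmapeq : ((algebraMap ℝ ℂ).mapMatrix (t • (1 : Matrix _ _ ℝ) - S))
        = (t : ℂ) • (1 : Matrix (Fin p ⊕ Fin p) (Fin p ⊕ Fin p) ℂ) - S.map (algebraMap ℝ ℂ) := by
      ext i j
      by_cases h : i = j <;>
        simp [Matrix.map_apply, Matrix.one_apply, Matrix.sub_apply, h]
    have hdetC : ((t : ℂ) • (1 : Matrix (Fin p ⊕ Fin p) (Fin p ⊕ Fin p) ℂ)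
        - S.map (algebraMap ℝ ℂ)).det = 0 := by
      have := congrArg (algebraMap ℝ ℂ) hdet
      rw [RingHom.map_det, map_zero, hmapeq] at this
      exact this
    have hmem : (t : ℂ) ∈ spectrum ℂ (S.map (algebraMap ℝ ℂ)) := by
      rw [spectrum.mem_iff]
      intro hu
      rw [Matrix.isUnit_iff_isUnit_det, Algebra.algebraMap_eq_smul_one, hdetC] at hu
      exact (by simpa using hu : False)
    have := hspec _ hmem
    simp at this
    exact ht this
  -- no real eigenvalues of S₁
  have hno1 : ∀ (t : ℝ) (v), S₁.mulVec v = t • v → v = 0 := by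
    intro t v hv
    by_contra hv0
    set x : ↥V₁ := ∑ i, v i • c i with hx
    have hrepr : ⇑(c.repr x) = v := by rw [hx]; exact c.repr_sum_self v
    have h1 : ⇑(c.repr (Sres x)) = t • v := by
      rw [← LinearMap.toMatrix_mulVec_repr c c Sres x, hrepr, ← hS₁, hv]
    have h2 : Sres x = t • x := by
      apply c.repr.injective
      apply DFunLike.coe_injective
      show ⇑(c.repr (Sres x)) = ⇑(c.repr (t • x))
      rw [h1, _root_.map_smul]
      funext i
      simp [hrepr]
    have hcoe : S.mulVec (x : (Fin p ⊕ Fin p) → ℝ) = t • (x : (Fin p ⊕ Fin p) → ℝ) := by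
      have h3 := congrArg (Subtype.val) h2
      rw [hSres, LinearMap.restrict_apply] at h3
      simp only at h3
      rw [← Matrix.toLin'_apply S, ← hfdef]
      rw [h3]
      rfl
    have hxne : (x : (Fin p ⊕ Fin p) → ℝ) ≠ 0 := by
      intro h0
      apply hv0
      rw [← hrepr]
      have : x = 0 := Subtype.ext h0
      rw [this, map_zero]
      rfl
    rcases eq_or_ne t 0 with rfl | ht
    · have hfx : f (x : _) = 0 := by
        rw [hfdef, Matrix.toLin'_apply, hcoe, zero_smul]
      have hmem : (x : (Fin p ⊕ Fin p) → ℝ) ∈ V₀ ⊓ V₁ := ⟨hker1 _ hfx, x.2⟩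
      rw [hdisj] at hmem
      exact hxne (by simpa using hmem)
    · exact hnoreal t ht _ hxne hcoe
  -- skewness of G * S₁
  have hMentry : ∀ i j, (G * S₁) i j = (c i : _) ⬝ᵥ (A * S).mulVec (c j : _) := by
    intro i j
    have hs : Sres (c j) = ∑ k, S₁ k j • c k := by
      conv_lhs => rw [← Basis.sum_repr c (Sres (c j))]
      refine Finset.sum_congr rfl fun k _ => ?_
      rw [hS₁, LinearMap.toMatrix_apply]
    have hstep : (G * S₁) i j = ∑ k, S₁ k j * ((c i : _) ⬝ᵥ A.mulVec (c k : _)) := by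
      rw [Matrix.mul_apply]
      exact Finset.sum_congr rfl fun k _ => by rw [hG]; exact mul_comm _ _
    rw [hstep]
    have : ((Sres (c j) : ↥V₁) : (Fin p ⊕ Fin p) → ℝ) = ∑ k, S₁ k j • ((c k : (Fin p ⊕ Fin p) → ℝ)) := by
      rw [hs, hcoesum]
    calc ∑ k, S₁ k j * ((c i : _) ⬝ᵥ A.mulVec (c k : _))
        = (c i : _) ⬝ᵥ A.mulVec ((Sres (c j) : ↥V₁) : _) := by
          rw [this, dotProduct_mulVec_sum_smul]
    _ = (c i : _) ⬝ᵥ (A * S).mulVec (c j : _) := by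
          rw [hSres, LinearMap.restrict_apply]
          simp only
          rw [hfdef, Matrix.toLin'_apply, Matrix.mulVec_mulVec]
  have hskew : (G * S₁)ᵀ = -(G * S₁) := by
    ext i j
    rw [Matrix.transpose_apply, Matrix.neg_apply, hMentry, hMentry,
      dot_flip (A * S) ((c j : (Fin p ⊕ Fin p) → ℝ)) ((c i : (Fin p ⊕ Fin p) → ℝ)), hAS, Matrix.neg_mulVec,
      dotProduct_neg]
  have hno2 : ∀ (t : ℝ) (v), (G * S₁).mulVec v = t • v → v = 0 := by
    intro t v hv
    by_contra hv0
    have hq : v ⬝ᵥ (G * S₁).mulVec v = t * (v ⬝ᵥ v) := by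
      rw [hv, dotProduct_smul]
      rfl
    have hq2 : v ⬝ᵥ (G * S₁).mulVec v = -(v ⬝ᵥ (G * S₁).mulVec v) := by
      conv_lhs => rw [dot_flip]
      rw [hskew, Matrix.neg_mulVec, dotProduct_neg]
    have hq0 : v ⬝ᵥ (G * S₁).mulVec v = 0 := by linarith
    have ht0 : t = 0 := by
      rw [hq] at hq0
      have hvv : v ⬝ᵥ v ≠ 0 := fun h => hv0 (dotProduct_self_eq_zero.mp h)
      exact (mul_eq_zero.mp hq0).resolve_right hvv
    rw [ht0, zero_smul] at hv
    have hS₁v : S₁.mulVec v = 0 := hGinj _ (by rw [Matrix.mulVec_mulVec, hv])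
    exact hv0 (hno1 0 v (by rw [hS₁v, zero_smul]))
  -- determinants
  have hdet1 : 0 < S₁.det := det_pos_of_no_real_eigen _ hno1
  have hdet2 : 0 < (G * S₁).det := det_pos_of_no_real_eigen _ hno2
  have hdetG : 0 < G.det := by
    rw [Matrix.det_mul] at hdet2
    nlinarith
  have hGdiag : G = Matrix.diagonal (fun i => (c i : _) ⬝ᵥ A.mulVec (c i : _)) := by
    ext i j
    by_cases h : i = j
    · subst h; simp [hG]
    · simp [hG, Matrix.diagonal_apply_ne _ h, hco i j h]
  have hprod : 0 < ∏ i, ((c i : _) ⬝ᵥ A.mulVec ((c i : ↥V₁) : _)) := by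
    rw [hGdiag, Matrix.det_diagonal] at hdetG
    exact hdetG
  have heven := even_card_neg_of_prod_pos hprod
  -- splits
  obtain ⟨N₁, P₁, hN₁V, hP₁V, hN₁neg, hP₁pos, hrank₁, hcard₁⟩ := split_of_basis c hco
  have hidx₁ : negIdxOn A V₁ = finrank ℝ N₁ :=
    negIdxOn_eq_of_split hN₁V hP₁V hN₁neg hP₁pos hrank₁
  have heven₁ : Even (negIdxOn A V₁) := by
    rw [hidx₁, hcard₁]
    exact heven
  obtain ⟨c₀, hco₀⟩ := exists_orthobasis A hA V₀
  obtain ⟨N₀, P₀, hN₀V, hP₀V, hN₀neg, hP₀pos, hrank₀, _⟩ := split_of_basis c₀ hco₀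
  have hidx₀ : negIdxOn A V₀ = finrank ℝ N₀ :=
    negIdxOn_eq_of_split hN₀V hP₀V hN₀neg hP₀pos hrank₀
  have hdisjN : N₀ ⊓ N₁ = ⊥ := by
    rw [eq_bot_iff, ← hdisj]
    exact inf_le_inf hN₀V hN₁V
  have hdisjP : P₀ ⊓ P₁ = ⊥ := by
    rw [eq_bot_iff, ← hdisj]
    exact inf_le_inf hP₀V hP₁V
  have hNsup : NegOn A (N₀ ⊔ N₁) := negOn_sup hA hN₀V hN₁V horthm hN₀neg hN₁neg
  have hPsup : PosOn A (P₀ ⊔ P₁) := posOn_sup hA hP₀V hP₁V horthm hP₀pos hP₁pos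
  have hrtot : finrank ℝ ↥(N₀ ⊔ N₁) + finrank ℝ ↥(P₀ ⊔ P₁)
      = finrank ℝ (⊤ : Submodule ℝ ((Fin p ⊕ Fin p) → ℝ)) := by
    rw [finrank_sup_of_disjoint hdisjN, finrank_sup_of_disjoint hdisjP, finrank_top]
    omega
  have hidxtot : negIdx A = finrank ℝ ↥(N₀ ⊔ N₁) := by
    rw [negIdx_eq_negIdxOn_top]
    exact negIdxOn_eq_of_split le_top le_top hNsup hPsup hrtot
  obtain ⟨k, hk⟩ := heven₁
  rw [hidxtot, finrank_sup_of_disjoint hdisjN, ← hidx₀, ← hidx₁]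
  omega
end

section
/- Let A be a real symmetric 2p×2p matrix such that the spectrum of JA is purely imaginary and such that JA has no nontrivial Jordan blocks for the eigenvalue 0 (i.e. ker(JA) = ker((JA)²)). Then both dim ker(A) and the number of negative eigenvalues of A are even. -/
open Matrix

lemma auxDetCont {m : Type*} [Fintype m] [DecidableEq m] (M N : Matrix m m ℝ) :
    Continuous fun t : ℝ => (M + t • N).det := by
  apply Continuous.matrix_det
  apply continuous_matrix
  intro i j
  simp only [Matrix.add_apply, Matrix.smul_apply, smul_eq_mul]
  exact continuous_const.add (continuous_id.mul continuous_const)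

lemma auxDetPosOnRay {m : Type*} [Fintype m] [DecidableEq m] (M : Matrix m m ℝ)
    (h : ∀ t : ℝ, 0 < t → (t • (1 : Matrix m m ℝ) - M).det ≠ 0) :
    ∀ t : ℝ, 0 < t → 0 < (t • (1 : Matrix m m ℝ) - M).det := by
  intro t ht
  set g : ℝ → ℝ := fun t => (t • (1 : Matrix m m ℝ) - M).det with hg
  have hgc : Continuous g := by
    have := auxDetCont (-M) (1 : Matrix m m ℝ)
    simpa [hg, add_comm, sub_eq_add_neg] using this
  -- find T > t with 0 < g T
  have hbig : ∃ T : ℝ, t < T ∧ 0 < g T := by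
    have hc : Continuous fun s : ℝ => ((1 : Matrix m m ℝ) + s • (-M)).det := auxDetCont 1 (-M)
    have h1 : (0:ℝ) < ((1 : Matrix m m ℝ) + (0:ℝ) • (-M)).det := by simp
    have hev : ∀ᶠ s in nhds (0:ℝ), 0 < ((1 : Matrix m m ℝ) + s • (-M)).det :=
      (hc.continuousAt).eventually_const_lt h1
    obtain ⟨ε, hε, hball⟩ := Metric.eventually_nhds_iff.mp hev
    set T := max (t + 1) (2 / ε) with hT
    have hTt : t < T := lt_of_lt_of_le (lt_add_one t) (le_max_left _ _)
    have hTpos : 0 < T := lt_trans ht hTt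
    have h2ε : (0:ℝ) < 2 / ε := by positivity
    have hTinv : T⁻¹ < ε := by
      have h1' : T⁻¹ ≤ (2 / ε)⁻¹ := by
        apply inv_anti₀ h2ε (le_max_right _ _)
      have : (2 / ε)⁻¹ = ε / 2 := by field_simp
      rw [this] at h1'
      linarith
    have hd : dist T⁻¹ (0:ℝ) < ε := by
      rw [Real.dist_eq, sub_zero, abs_of_pos (inv_pos.mpr hTpos)]; exact hTinv
    have hgT : 0 < g T := by
      have hfac : T • (1 : Matrix m m ℝ) - M = T • ((1 : Matrix m m ℝ) + T⁻¹ • (-M)) := by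
        rw [smul_add, smul_smul, mul_inv_cancel₀ (ne_of_gt hTpos), one_smul, sub_eq_add_neg]
      rw [hg]
      simp only
      rw [hfac, Matrix.det_smul]
      exact mul_pos (pow_pos hTpos _) (hball hd)
    exact ⟨T, hTt, hgT⟩
  obtain ⟨T, hTt, hgT⟩ := hbig
  rcases lt_trichotomy (g t) 0 with hneg | hzero | hpos
  · exfalso
    have hsub := intermediate_value_Icc (le_of_lt hTt) hgc.continuousOn
    have h0mem : (0:ℝ) ∈ Set.Icc (g t) (g T) := ⟨le_of_lt hneg, le_of_lt hgT⟩
    obtain ⟨s, hs, hgs⟩ := hsub h0mem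
    exact h s (lt_of_lt_of_le ht hs.1) hgs
  · exact absurd hzero (h t ht)
  · exact hpos

lemma auxDetPos {m : Type*} [Fintype m] [DecidableEq m] (M : Matrix m m ℝ)
    (h : ∀ t : ℝ, 0 ≤ t → (t • (1 : Matrix m m ℝ) - M).det ≠ 0)
    (hcard : Even (Fintype.card m)) : 0 < M.det := by
  have hray := auxDetPosOnRay M (fun t ht => h t (le_of_lt ht))
  have hgc : Continuous fun t : ℝ => (t • (1 : Matrix m m ℝ) - M).det := by
    have := auxDetCont (-M) (1 : Matrix m m ℝ)
    simpa [add_comm, sub_eq_add_neg] using this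
  have htd : Filter.Tendsto (fun t : ℝ => (t • (1 : Matrix m m ℝ) - M).det)
      (nhdsWithin 0 (Set.Ioi 0)) (nhds (((0:ℝ) • (1 : Matrix m m ℝ) - M).det)) :=
    (hgc.continuousAt).mono_left nhdsWithin_le_nhds
  have hge : 0 ≤ ((0:ℝ) • (1 : Matrix m m ℝ) - M).det := by
    apply ge_of_tendsto htd
    filter_upwards [self_mem_nhdsWithin] with s hs
    exact le_of_lt (hray s hs)
  have hne : ((0:ℝ) • (1 : Matrix m m ℝ) - M).det ≠ 0 := h 0 le_rfl
  have h0 : ((0:ℝ) • (1 : Matrix m m ℝ) - M).det = M.det := by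
    rw [zero_smul, zero_sub, Matrix.det_neg, hcard.neg_one_pow, one_mul]
  rw [h0] at hge hne
  exact lt_of_le_of_ne hge (Ne.symm hne)

noncomputable def extZero {m : Type*} (P : m → Prop) [DecidablePred P] :
    ({i // P i} → ℝ) →ₗ[ℝ] (m → ℝ) where
  toFun c := fun i => if h : P i then c ⟨i, h⟩ else 0
  map_add' a b := by funext i; by_cases h : P i <;> simp [h]
  map_smul' r a := by funext i; by_cases h : P i <;> simp [h]

lemma extZero_inj {m : Type*} (P : m → Prop) [DecidablePred P] :
    Function.Injective (extZero P) := by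
  intro a b hab
  funext i
  have := congrFun hab i.1
  simpa [extZero, i.2] using this

lemma dotU {m : Type*} [Fintype m] [DecidableEq m] {U : Matrix m m ℝ}
    (hU : Uᵀ * U = 1) (a b : m → ℝ) : (U *ᵥ a) ⬝ᵥ (U *ᵥ b) = a ⬝ᵥ b := by
  rw [dotProduct_mulVec, ← vecMul_transpose, vecMul_vecMul, hU, vecMul_one]

set_option maxHeartbeats 1000000 in
/-- If `A` is real symmetric `2p × 2p`, the spectrum of `JA` is purely imaginary, and `JA`
has no nontrivial Jordan blocks for the eigenvalue `0` (i.e. `ker (JA) = ker (JA)²`), then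
both `dim ker A` and the number of negative eigenvalues of `A` are even. -/
theorem stmt1 (p : ℕ) (A : Matrix (Fin p ⊕ Fin p) (Fin p ⊕ Fin p) ℝ)
    (hA : A.IsSymm)
    (J : Matrix (Fin p ⊕ Fin p) (Fin p ⊕ Fin p) ℝ)
    (hJ : J = Matrix.fromBlocks 0 (-1) 1 0)
    (hspec : ∀ μ ∈ spectrum ℂ ((J * A).map (algebraMap ℝ ℂ)), μ.re = 0)
    (hJordan : LinearMap.ker (Matrix.toLin' (J * A))
      = LinearMap.ker (Matrix.toLin' ((J * A) ^ 2))) :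
    Even (Module.finrank ℝ (LinearMap.ker (Matrix.toLin' A))) ∧ Even (negIdx A) := by
  classical
  have hcardEven : Even (Fintype.card (Fin p ⊕ Fin p)) := by
    simp only [Fintype.card_sum, Fintype.card_fin]
    exact ⟨p, rfl⟩
  have hAH : A.IsHermitian := by
    rw [Matrix.IsHermitian, conjTranspose_eq_transpose_of_trivial]; exact hA
  have hJJ : J * J = -1 := by
    rw [hJ, Matrix.fromBlocks_multiply]
    simp only [Matrix.zero_mul, Matrix.mul_zero, Matrix.neg_mul, Matrix.one_mul,
      Matrix.mul_one, Matrix.mul_neg, add_zero, zero_add, neg_neg]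
    rw [← Matrix.fromBlocks_one]
    ext i j
    cases i <;> cases j <;>
      simp [Matrix.fromBlocks]
  have hJT : Jᵀ = -J := by
    rw [hJ, Matrix.fromBlocks_transpose]
    ext i j
    cases i <;> cases j <;> simp [Matrix.fromBlocks]
  set U : Matrix (Fin p ⊕ Fin p) (Fin p ⊕ Fin p) ℝ :=
    (hAH.eigenvectorUnitary : Matrix (Fin p ⊕ Fin p) (Fin p ⊕ Fin p) ℝ) with hU
  set μ : (Fin p ⊕ Fin p) → ℝ := hAH.eigenvalues with hμ
  have hstarU : star U = Uᵀ :=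
    (Matrix.star_eq_conjTranspose U).trans (conjTranspose_eq_transpose_of_trivial U)
  have hUtU : Uᵀ * U = 1 := by
    rw [← hstarU]; exact Unitary.coe_star_mul_self hAH.eigenvectorUnitary
  have hUUt : U * Uᵀ = 1 := by
    rw [← hstarU]; exact Unitary.coe_mul_star_self hAH.eigenvectorUnitary
  set D : Matrix (Fin p ⊕ Fin p) (Fin p ⊕ Fin p) ℝ := diagonal μ with hD
  have hAspec : A = U * D * Uᵀ := by
    have h := hAH.spectral_theorem
    rw [Unitary.conjStarAlgAut_apply, ← hU, hstarU] at h
    exact h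
  have hADU : ∀ c, A *ᵥ (U *ᵥ c) = U *ᵥ (fun i => μ i * c i) := by
    intro c
    have hAU : A * U = U * D := by
      rw [hAspec, Matrix.mul_assoc, Matrix.mul_assoc, hUtU, Matrix.mul_one]
    have hDc : D *ᵥ c = fun i => μ i * c i := by
      funext i; rw [hD, mulVec_diagonal]
    rw [mulVec_mulVec, hAU, ← mulVec_mulVec, hDc]
  have hUinj : ∀ a b, U *ᵥ a = U *ᵥ b → a = b := by
    intro a b h
    have h2 := congrArg (fun x => Uᵀ *ᵥ x) h
    simpa [mulVec_mulVec, hUtU] using h2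
  set J' : Matrix (Fin p ⊕ Fin p) (Fin p ⊕ Fin p) ℝ := Uᵀ * J * U with hJ'def
  have hJ'T : J'ᵀ = -J' := by
    rw [hJ'def, transpose_mul, transpose_mul, transpose_transpose, hJT]
    rw [Matrix.neg_mul, Matrix.mul_neg, Matrix.mul_assoc]
  set JZZ : Matrix {i // μ i = 0} {i // μ i = 0} ℝ :=
    J'.submatrix Subtype.val Subtype.val with hJZZ
  have hsumZ : ∀ (f : (Fin p ⊕ Fin p) → ℝ), (∀ i, ¬ μ i = 0 → f i = 0) →
      ∑ i, f i = ∑ i : {i // μ i = 0}, f i.1 := by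
    intro f hf
    rw [← Equiv.sum_comp (Equiv.sumCompl (fun i => μ i = 0)) f, Fintype.sum_sum_type]
    have h2 : ∀ b : {i // ¬ μ i = 0}, f b.1 = 0 := fun b => hf b.1 b.2
    simp [h2]
  -- key kernel nondegeneracy, uses hJordan
  have hker : ∀ c : (Fin p ⊕ Fin p) → ℝ, (∀ i, ¬ μ i = 0 → c i = 0) →
      (∀ j, μ j = 0 → (J' *ᵥ c) j = 0) → c = 0 := by
    intro c hsupp horth
    set x := U *ᵥ c with hx
    have hDc : U *ᵥ (fun i => μ i * c i) = 0 := by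
      have h1 : (fun i => μ i * c i) = (0 : (Fin p ⊕ Fin p) → ℝ) := by
        funext i
        by_cases h : μ i = 0
        · rw [h, zero_mul]; rfl
        · rw [hsupp i h, mul_zero]; rfl
      rw [h1, mulVec_zero]
    have hAx : A *ᵥ x = 0 := by rw [hx, hADU]; exact hDc
    set w := Uᵀ *ᵥ (J *ᵥ x) with hwdef
    have hw : ∀ j, μ j = 0 → w j = 0 := by
      intro j hj
      have h1 : w = J' *ᵥ c := by
        rw [hwdef, hx, mulVec_mulVec, mulVec_mulVec, hJ'def]
      rw [h1]; exact horth j hj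
    set zc := fun j => if μ j = 0 then 0 else w j / μ j with hzc
    have hDz : (fun i => μ i * zc i) = w := by
      funext i
      by_cases h : μ i = 0
      · simp only [hzc, h, if_true, mul_zero]
        exact (hw i h).symm
      · simp only [hzc, h, if_false]
        field_simp
    have hAz : A *ᵥ (U *ᵥ zc) = J *ᵥ x := by
      rw [hADU, hDz, hwdef, mulVec_mulVec, mulVec_mulVec, hUUt, Matrix.one_mul]
    have hJAz : (J * A) *ᵥ (U *ᵥ zc) = -x := by
      rw [← mulVec_mulVec, hAz, mulVec_mulVec, hJJ]
      change (-(1 : Matrix (Fin p ⊕ Fin p) (Fin p ⊕ Fin p) ℝ)) *ᵥ x = -x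
      rw [Matrix.neg_mulVec, Matrix.one_mulVec]
    have hz2 : ((J * A) ^ 2) *ᵥ (U *ᵥ zc) = 0 := by
      rw [pow_two, ← mulVec_mulVec, hJAz, Matrix.mulVec_neg, ← mulVec_mulVec, hAx,
        mulVec_zero, neg_zero]
    have hmem : U *ᵥ zc ∈ LinearMap.ker (Matrix.toLin' ((J * A) ^ 2)) := by
      rw [LinearMap.mem_ker, Matrix.toLin'_apply]; exact hz2
    rw [← hJordan] at hmem
    rw [LinearMap.mem_ker, Matrix.toLin'_apply, hJAz, neg_eq_zero] at hmem
    apply hUinj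
    rw [mulVec_zero, ← hx]; exact hmem
  have hJZZT : JZZᵀ = -JZZ := by
    ext i j
    have h1 := congrFun (congrFun hJ'T i.1) j.1
    simpa [hJZZ] using h1
  have hJZZdet : JZZ.det ≠ 0 := by
    intro h0
    obtain ⟨v, hv, hv0⟩ := (Matrix.exists_mulVec_eq_zero_iff).mpr h0
    set c : (Fin p ⊕ Fin p) → ℝ := fun i => if h : μ i = 0 then v ⟨i, h⟩ else 0 with hc
    have h1 : ∀ i, ¬ μ i = 0 → c i = 0 := fun i h => dif_neg h
    have h2 : ∀ j, μ j = 0 → (J' *ᵥ c) j = 0 := by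
      intro j hj
      have h3 : (J' *ᵥ c) j = (JZZ *ᵥ v) ⟨j, hj⟩ := by
        show ∑ i, J' j i * c i = ∑ i : {i // μ i = 0}, JZZ ⟨j, hj⟩ i * v i
        rw [hsumZ (fun i => J' j i * c i) (fun i h => by simp [h1 i h])]
        apply Finset.sum_congr rfl
        intro i _
        simp [hc, i.2, hJZZ]
      rw [h3, hv0]; rfl
    have h4 := hker c h1 h2
    apply hv
    funext i
    have h5 := congrFun h4 i.1
    simpa [hc, i.2] using h5
  have hzEven : Even (Fintype.card {i // μ i = 0}) := by
    rcases Nat.even_or_odd (Fintype.card {i // μ i = 0}) with h | h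
    · exact h
    · exfalso
      apply hJZZdet
      have h1 : JZZ.det = -JZZ.det := by
        conv_lhs => rw [← Matrix.det_transpose JZZ, hJZZT]
        rw [Matrix.det_neg, h.neg_one_pow]
        ring
      linarith
  have hskewNoPos : ∀ t : ℝ, 0 ≤ t → (t • (1 : Matrix {i // μ i = 0} {i // μ i = 0} ℝ)
      - JZZ).det ≠ 0 := by
    intro t ht h0
    rcases eq_or_lt_of_le ht with h | h
    · apply hJZZdet
      rw [← h, zero_smul, zero_sub] at h0
      have h1 : (-JZZ).det = JZZ.det := by
        rw [← hJZZT, Matrix.det_transpose]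
      rwa [h1] at h0
    · obtain ⟨v, hv, hv0⟩ := (Matrix.exists_mulVec_eq_zero_iff).mpr h0
      have hEig : JZZ *ᵥ v = t • v := by
        have h1 := hv0
        rw [Matrix.sub_mulVec, Matrix.smul_mulVec, Matrix.one_mulVec, sub_eq_zero] at h1
        exact h1.symm
      have hq : v ⬝ᵥ (JZZ *ᵥ v) = 0 := by
        have h1 : v ⬝ᵥ (JZZ *ᵥ v) = (v ᵥ* JZZ) ⬝ᵥ v := dotProduct_mulVec v JZZ v
        have h2 : v ᵥ* JZZ = -(JZZ *ᵥ v) := by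
          have h2a := vecMul_transpose JZZᵀ v
          rw [transpose_transpose] at h2a
          rw [h2a, hJZZT, Matrix.neg_mulVec]
        have h3 : (JZZ *ᵥ v) ⬝ᵥ v = v ⬝ᵥ (JZZ *ᵥ v) := dotProduct_comm _ _
        rw [h2, neg_dotProduct, h3] at h1
        linarith
      rw [hEig, dotProduct_smul, smul_eq_mul] at hq
      have h3 : v ⬝ᵥ v = 0 := by
        rcases mul_eq_zero.mp hq with h' | h'
        · exact absurd h' (ne_of_gt h)
        · exact h'
      exact hv (dotProduct_self_eq_zero.mp h3)
  have hJZZpos : 0 < JZZ.det := auxDetPos JZZ hskewNoPos hzEven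
  have hdetJpos : 0 < J.det := by
    apply auxDetPos J ?_ hcardEven
    intro t _ h0
    obtain ⟨v, hv, hv0⟩ := (Matrix.exists_mulVec_eq_zero_iff).mpr h0
    have hEig : J *ᵥ v = t • v := by
      rw [Matrix.sub_mulVec, Matrix.smul_mulVec, Matrix.one_mulVec, sub_eq_zero] at hv0
      exact hv0.symm
    have h1 : (J * J) *ᵥ v = t • (t • v) := by
      rw [← mulVec_mulVec, hEig, Matrix.mulVec_smul, hEig]
    rw [hJJ] at h1
    have h2 : -v = t • t • v := by
      have : (-(1 : Matrix (Fin p ⊕ Fin p) (Fin p ⊕ Fin p) ℝ)) *ᵥ v = -v := by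
        rw [Matrix.neg_mulVec, Matrix.one_mulVec]
      rwa [this] at h1
    obtain ⟨i, hi⟩ := Function.ne_iff.mp hv
    have h3 := congrFun h2 i
    simp only [Pi.neg_apply, Pi.smul_apply, smul_eq_mul, Pi.zero_apply] at h3 hi
    rcases lt_trichotomy (v i) 0 with hvi | hvi | hvi
    · nlinarith [sq_nonneg t]
    · exact hi hvi
    · nlinarith [sq_nonneg t]
  have hchar : ∀ t : ℝ, t ≠ 0 →
      (t • (1 : Matrix (Fin p ⊕ Fin p) (Fin p ⊕ Fin p) ℝ) - J * A).det ≠ 0 := by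
    intro t ht h0
    have hmap : ((t • (1 : Matrix (Fin p ⊕ Fin p) (Fin p ⊕ Fin p) ℝ) - J * A).map
        (algebraMap ℝ ℂ)).det = 0 := by
      have hmd := (algebraMap ℝ ℂ).map_det (t • (1 : Matrix (Fin p ⊕ Fin p) (Fin p ⊕ Fin p) ℝ)
        - J * A)
      rw [RingHom.mapMatrix_apply] at hmd
      rw [← hmd, h0, map_zero]
    have heq : (t • (1 : Matrix (Fin p ⊕ Fin p) (Fin p ⊕ Fin p) ℝ) - J * A).map
        (algebraMap ℝ ℂ)
        = (algebraMap ℂ (Matrix (Fin p ⊕ Fin p) (Fin p ⊕ Fin p) ℂ)) (t : ℂ)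
          - (J * A).map (algebraMap ℝ ℂ) := by
      ext i j
      simp [Matrix.map_apply, Matrix.algebraMap_matrix_apply,
        Matrix.one_apply, apply_ite (algebraMap ℝ ℂ)]
      split_ifs <;> simp
    have hmem : (t : ℂ) ∈ spectrum ℂ ((J * A).map (algebraMap ℝ ℂ)) := by
      rw [spectrum.mem_iff]
      intro hu
      rw [← heq, Matrix.isUnit_iff_isUnit_det, hmap] at hu
      exact not_isUnit_zero hu
    have h5 := hspec _ hmem
    rw [Complex.ofReal_re] at h5
    exact ht h5
  have hfpos : ∀ t : ℝ, 0 < t → 0 < (A + t • J).det := by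
    intro t ht
    have h1 : (-J) * (A + t • J) = t • 1 - J * A := by
      rw [Matrix.neg_mul, Matrix.mul_add, Matrix.mul_smul, hJJ, smul_neg]
      ext i j
      simp [sub_eq_add_neg, add_comm]
    have h2 : J.det * (A + t • J).det = (t • (1 : Matrix (Fin p ⊕ Fin p) (Fin p ⊕ Fin p) ℝ)
        - J * A).det := by
      have hdn : (-J).det = J.det := by
        rw [Matrix.det_neg, hcardEven.neg_one_pow, one_mul]
      rw [← h1, Matrix.det_mul, hdn]
    have h3 := auxDetPosOnRay (J * A) (fun s hs => hchar s (ne_of_gt hs)) t ht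
    nlinarith
  set Mt : ℝ → Matrix (Fin p ⊕ Fin p) (Fin p ⊕ Fin p) ℝ :=
    fun t => Matrix.of (fun i j => if μ i = 0 then J' i j else (D + t • J') i j) with hMt
  have hfactor : ∀ t : ℝ, (A + t • J).det = t ^ (Fintype.card {i // μ i = 0}) * (Mt t).det := by
    intro t
    have hUconj : A + t • J = U * (D + t • J') * Uᵀ := by
      rw [hAspec, hJ'def, Matrix.mul_add, Matrix.add_mul, Matrix.mul_smul, Matrix.smul_mul]
      congr 2
      simp only [← Matrix.mul_assoc]
      rw [hUUt, Matrix.one_mul, Matrix.mul_assoc, hUUt, Matrix.mul_one]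
    have hdetU : U.det * Uᵀ.det = 1 := by rw [← Matrix.det_mul, hUUt, Matrix.det_one]
    have hstep1 : (A + t • J).det = (D + t • J').det := by
      rw [hUconj, Matrix.det_mul, Matrix.det_mul]
      calc U.det * (D + t • J').det * Uᵀ.det
          = (D + t • J').det * (U.det * Uᵀ.det) := by ring
        _ = (D + t • J').det := by rw [hdetU, mul_one]
    have hrow : D + t • J' = Matrix.of (fun i j => (if μ i = 0 then t else 1) * (Mt t) i j) := by
      ext i j
      by_cases h : μ i = 0
      · simp only [Matrix.add_apply, Matrix.smul_apply, smul_eq_mul, hD, diagonal_apply,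
          Matrix.of_apply, h, if_true, hMt]
        by_cases hij : i = j
        · rw [if_pos hij]; simp
        · rw [if_neg hij]; simp
      · simp [hMt, h]
    rw [hstep1, hrow, Matrix.det_mul_column]
    congr 1
    rw [Finset.prod_ite, Finset.prod_const, Finset.prod_const_one, mul_one,
      Fintype.card_subtype]
  have hMtpos : ∀ t : ℝ, 0 < t → 0 < (Mt t).det := by
    intro t ht
    have h1 := hfpos t ht
    rw [hfactor t] at h1
    have h2 : (0:ℝ) < t ^ (Fintype.card {i // μ i = 0}) := pow_pos ht _
    nlinarith
  have hM0 : (Mt 0).det =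
      (∏ i ∈ Finset.univ.filter (fun i => ¬ μ i = 0), μ i) * JZZ.det := by
    set M' : Matrix (Fin p ⊕ Fin p) (Fin p ⊕ Fin p) ℝ :=
      Matrix.of (fun i j => if μ i = 0 then J' i j
        else (1 : Matrix (Fin p ⊕ Fin p) (Fin p ⊕ Fin p) ℝ) i j) with hM'
    have h0 : Mt 0 = Matrix.of (fun i j => (if μ i = 0 then 1 else μ i) * M' i j) := by
      ext i j
      by_cases h : μ i = 0
      · simp [hMt, hM', h]
      · simp only [hMt, Matrix.of_apply, h, if_false, Matrix.add_apply, Matrix.smul_apply,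
          zero_smul, Matrix.zero_apply, add_zero, hD, diagonal_apply, hM', Matrix.one_apply]
        split_ifs <;> ring
    have hblock : M'.submatrix (Equiv.sumCompl (fun i => μ i = 0))
        (Equiv.sumCompl (fun i => μ i = 0))
        = Matrix.fromBlocks JZZ (J'.submatrix Subtype.val Subtype.val) 0 1 := by
      ext i j
      cases i with
      | inl a =>
        cases j with
        | inl b => simp [hM', a.2, hJZZ]
        | inr b => simp [hM', a.2]
      | inr a =>
        cases j with
        | inl b =>
          simp only [Matrix.submatrix_apply, Equiv.sumCompl_apply_inl, Equiv.sumCompl_apply_inr,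
            hM', Matrix.of_apply, a.2, if_false, Matrix.one_apply, Matrix.fromBlocks_apply₂₁,
            Matrix.zero_apply]
          rw [if_neg]
          intro h
          exact a.2 (h ▸ b.2)
        | inr b =>
          simp only [Matrix.submatrix_apply, Equiv.sumCompl_apply_inr, hM', Matrix.of_apply,
            a.2, if_false, Matrix.one_apply, Matrix.fromBlocks_apply₂₂]
          by_cases hab : a = b
          · rw [if_pos (congrArg Subtype.val hab), if_pos hab]
          · rw [if_neg (fun h => hab (Subtype.ext h)), if_neg hab]
    have hdetM' : M'.det = JZZ.det := by
      rw [← Matrix.det_submatrix_equiv_self (Equiv.sumCompl (fun i => μ i = 0)) M', hblock,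
        Matrix.det_fromBlocks_zero₂₁, Matrix.det_one, mul_one]
    rw [h0, Matrix.det_mul_column, hdetM']
    congr 1
    rw [Finset.prod_ite, Finset.prod_const_one, one_mul]
  have hM0nonneg : 0 ≤ (Mt 0).det := by
    have hc : Continuous fun t : ℝ => (Mt t).det := by
      apply Continuous.matrix_det
      apply continuous_matrix
      intro i j
      by_cases h : μ i = 0
      · simp only [hMt, Matrix.of_apply, h, if_true]; exact continuous_const
      · simp only [hMt, Matrix.of_apply, h, if_false, Matrix.add_apply, Matrix.smul_apply,
          smul_eq_mul]
        exact continuous_const.add (continuous_id.mul continuous_const)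
    apply ge_of_tendsto ((hc.continuousAt).mono_left nhdsWithin_le_nhds :
      Filter.Tendsto (fun t : ℝ => (Mt t).det) (nhdsWithin 0 (Set.Ioi 0)) (nhds ((Mt 0).det)))
    filter_upwards [self_mem_nhdsWithin] with s hs
    exact le_of_lt (hMtpos s hs)
  have hprodpos : 0 < ∏ i ∈ Finset.univ.filter (fun i => ¬ μ i = 0), μ i := by
    have hne : (∏ i ∈ Finset.univ.filter (fun i => ¬ μ i = 0), μ i) ≠ 0 :=
      Finset.prod_ne_zero_iff.mpr (fun i hi => (Finset.mem_filter.mp hi).2)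
    rw [hM0] at hM0nonneg
    rcases Ne.lt_or_gt hne with h | h
    · nlinarith
    · exact h
  have hNeven : Even (Fintype.card {i // μ i < 0}) := by
    have hsplit : Finset.univ.filter (fun i => ¬ μ i = 0)
        = Finset.univ.filter (fun i => μ i < 0) ∪ Finset.univ.filter (fun i => 0 < μ i) := by
      ext i
      simp only [Finset.mem_filter, Finset.mem_univ, true_and, Finset.mem_union]
      constructor
      · intro h; rcases Ne.lt_or_gt h with h' | h'
        · exact Or.inl h'
        · exact Or.inr h'
      · rintro (h | h)
        · exact ne_of_lt h
        · exact (ne_of_gt h)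
    have hdisj : Disjoint (Finset.univ.filter (fun i => μ i < 0))
        (Finset.univ.filter (fun i => 0 < μ i)) := by
      rw [Finset.disjoint_filter]
      intro i _ h1
      exact not_lt.mpr (le_of_lt h1)
    rw [hsplit, Finset.prod_union hdisj] at hprodpos
    have hpos2 : 0 < ∏ i ∈ Finset.univ.filter (fun i => 0 < μ i), μ i :=
      Finset.prod_pos (fun i hi => (Finset.mem_filter.mp hi).2)
    have hnegprod : 0 < ∏ i ∈ Finset.univ.filter (fun i => μ i < 0), μ i := by nlinarith
    set s := Finset.univ.filter (fun i => μ i < 0) with hs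
    have hfac : ∏ i ∈ s, μ i = (-1 : ℝ) ^ s.card * ∏ i ∈ s, (-μ i) := by
      rw [← Finset.prod_const, ← Finset.prod_mul_distrib]
      apply Finset.prod_congr rfl
      intro i _
      ring
    have habs : 0 < ∏ i ∈ s, (-μ i) :=
      Finset.prod_pos (fun i hi => by
        have := (Finset.mem_filter.mp hi).2
        linarith)
    rcases Nat.even_or_odd s.card with h | h
    · rw [Fintype.card_subtype]
      exact h
    · exfalso
      rw [hfac, h.neg_one_pow] at hnegprod
      nlinarith
  have hkerdim : Module.finrank ℝ (LinearMap.ker (Matrix.toLin' A))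
      = Fintype.card {i // μ i = 0} := by
    set φ := (Matrix.toLin' U).comp (extZero (fun i => μ i = 0)) with hφ
    have hφinj : Function.Injective φ := by
      intro a b h
      apply extZero_inj (fun i => μ i = 0)
      apply hUinj
      simpa [hφ, Matrix.toLin'_apply] using h
    have hrange : LinearMap.range φ = LinearMap.ker (Matrix.toLin' A) := by
      ext x
      constructor
      · rintro ⟨c, rfl⟩
        rw [LinearMap.mem_ker, Matrix.toLin'_apply]
        simp only [hφ, LinearMap.comp_apply, Matrix.toLin'_apply]
        rw [hADU]
        have h1 : (fun i => μ i * (extZero (fun i => μ i = 0) c) i)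
            = (0 : (Fin p ⊕ Fin p) → ℝ) := by
          funext i
          by_cases h : μ i = 0
          · rw [h, zero_mul]; rfl
          · simp [extZero, h]
        rw [h1, mulVec_zero]
      · intro hx
        rw [LinearMap.mem_ker, Matrix.toLin'_apply] at hx
        set c := Uᵀ *ᵥ x with hc
        have hxc : U *ᵥ c = x := by rw [hc, mulVec_mulVec, hUUt, Matrix.one_mulVec]
        have hDc : (fun i => μ i * c i) = (0 : (Fin p ⊕ Fin p) → ℝ) := by
          apply hUinj
          rw [← hADU, hxc, hx, mulVec_zero]
        refine ⟨fun i => c i.1, ?_⟩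
        have hext : extZero (fun i => μ i = 0) (fun i : {i // μ i = 0} => c i.1) = c := by
          funext i
          by_cases h : μ i = 0
          · simp [extZero, h]
          · have h2 := congrFun hDc i
            simp only [Pi.zero_apply] at h2
            have hci : c i = 0 := by
              rcases mul_eq_zero.mp h2 with h' | h'
              · exact absurd h' h
              · exact h'
            simp [extZero, h, hci]
        simp only [hφ, LinearMap.comp_apply, Matrix.toLin'_apply]
        rw [hext, hxc]
    rw [← hrange, LinearMap.finrank_range_of_inj hφinj]
    exact Module.finrank_fintype_fun_eq_card ℝ
  have hQ : ∀ c, (U *ᵥ c) ⬝ᵥ (A *ᵥ (U *ᵥ c)) = ∑ i, μ i * c i ^ 2 := by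
    intro c
    rw [hADU, dotU hUtU, dotProduct]
    apply Finset.sum_congr rfl
    intro i _
    ring
  have hnegIdx : negIdx A = Fintype.card {i // μ i < 0} := by
    unfold negIdx
    apply IsGreatest.csSup_eq
    constructor
    · -- membership: the span of negative eigenvectors
      set φ := (Matrix.toLin' U).comp (extZero (fun i => μ i < 0)) with hφ
      have hφinj : Function.Injective φ := by
        intro a b h
        apply extZero_inj (fun i => μ i < 0)
        apply hUinj
        simpa [hφ, Matrix.toLin'_apply] using h
      refine ⟨LinearMap.range φ, ?_, ?_⟩
      · rw [LinearMap.finrank_range_of_inj hφinj]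
        exact Module.finrank_fintype_fun_eq_card ℝ
      · rintro x ⟨c, rfl⟩ hx0
        simp only [hφ, LinearMap.comp_apply, Matrix.toLin'_apply]
        set e := extZero (fun i => μ i < 0) c with he
        rw [show A.mulVec (U *ᵥ e) = A *ᵥ (U *ᵥ e) from rfl, hQ]
        have hexist : ∃ i, e i ≠ 0 := by
          by_contra h
          push_neg at h
          apply hx0
          simp only [hφ, LinearMap.comp_apply, Matrix.toLin'_apply]
          have : e = 0 := funext h
          rw [← he, this, mulVec_zero]
        obtain ⟨i0, hi0⟩ := hexist
        have hi0neg : μ i0 < 0 := by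
          by_contra h
          exact hi0 (by simp [he, extZero, h])
        have h1 : ∀ i ∈ Finset.univ, μ i * e i ^ 2 ≤ (fun _ => (0:ℝ)) i := by
          intro i _
          show μ i * e i ^ 2 ≤ 0
          by_cases h : μ i < 0
          · nlinarith [sq_nonneg (e i)]
          · have : e i = 0 := by simp [he, extZero, h]
            rw [this]
            norm_num
        have h2 : ∃ i ∈ Finset.univ, μ i * e i ^ 2 < (fun _ => (0:ℝ)) i := by
          refine ⟨i0, Finset.mem_univ _, ?_⟩
          show μ i0 * e i0 ^ 2 < 0
          have : 0 < e i0 ^ 2 := by positivity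
          nlinarith
        have h3 := Finset.sum_lt_sum h1 h2
        rwa [Finset.sum_const_zero] at h3
    · -- upper bound
      rintro d ⟨W, hWrank, hWneg⟩
      set ψ := (Matrix.toLin' U).comp (extZero (fun i => ¬ μ i < 0)) with hψ
      have hψinj : Function.Injective ψ := by
        intro a b h
        apply extZero_inj (fun i => ¬ μ i < 0)
        apply hUinj
        simpa [hψ, Matrix.toLin'_apply] using h
      set W' := LinearMap.range ψ with hW'
      have hW'rank : Module.finrank ℝ W' = Fintype.card {i // ¬ μ i < 0} := by
        rw [hW', LinearMap.finrank_range_of_inj hψinj]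
        exact Module.finrank_fintype_fun_eq_card ℝ
      have hW'nonneg : ∀ x ∈ W', 0 ≤ x ⬝ᵥ A.mulVec x := by
        rintro x ⟨c, rfl⟩
        simp only [hψ, LinearMap.comp_apply, Matrix.toLin'_apply]
        set e := extZero (fun i => ¬ μ i < 0) c with he
        rw [show A.mulVec (U *ᵥ e) = A *ᵥ (U *ᵥ e) from rfl, hQ]
        apply Finset.sum_nonneg
        intro i _
        by_cases h : μ i < 0
        · have : e i = 0 := by simp [he, extZero, h]
          rw [this]
          norm_num
        · push_neg at h
          nlinarith [sq_nonneg (e i)]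
      have hdisj : W ⊓ W' = ⊥ := by
        rw [Submodule.eq_bot_iff]
        intro x hx
        by_contra hx0
        exact absurd (hW'nonneg x hx.2) (not_le.mpr (hWneg x hx.1 hx0))
      have hsum := Submodule.finrank_sup_add_finrank_inf_eq W W'
      rw [hdisj] at hsum
      have hle : Module.finrank ℝ ↥(W ⊔ W') ≤ Fintype.card (Fin p ⊕ Fin p) := by
        have h1 := Submodule.finrank_le (W ⊔ W')
        rwa [Module.finrank_fintype_fun_eq_card ℝ] at h1
      have hcompl : Fintype.card {i // ¬ μ i < 0}
          = Fintype.card (Fin p ⊕ Fin p) - Fintype.card {i // μ i < 0} :=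
        Fintype.card_subtype_compl _
      have hNle : Fintype.card {i // μ i < 0} ≤ Fintype.card (Fin p ⊕ Fin p) :=
        Fintype.card_subtype_le _
      have hbot : Module.finrank ℝ (⊥ : Submodule ℝ ((Fin p ⊕ Fin p) → ℝ)) = 0 :=
        finrank_bot ℝ _
      omega
  exact ⟨hkerdim ▸ hzEven, hnegIdx ▸ hNeven⟩
end

section
/- Let A be a real symmetric 2p×2p matrix with odd-dimensional kernel such that the spectrum of JA is purely imaginary. Then the generalized kernel ker((JA)^{2p}) is strictly larger than ker(JA); in particular JA is not diagonalizable (hence linearly unstable). -/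
open Matrix

set_option linter.unusedSectionVars false
set_option maxHeartbeats 1000000

section Aux
variable {n : Type*} [Fintype n] [DecidableEq n]

lemma auxRankNullity (K : Type*) [Field K] (X : Matrix n n K) :
    X.rank + Module.finrank K (LinearMap.ker X.mulVecLin) = Fintype.card n := by
  have h := LinearMap.finrank_range_add_finrank_ker X.mulVecLin
  rwa [Module.finrank_pi] at h

open scoped ComplexOrder in
lemma auxConjRank (Y : Matrix n n ℂ) : (Y.map (starRingEnd ℂ)).rank = Y.rank := by
  have h : Y.map (starRingEnd ℂ) = Yᴴᵀ := by
    ext i j; simp [Matrix.conjTranspose_apply]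
  rw [h, Matrix.rank_transpose, Matrix.rank_conjTranspose]

lemma auxMapPow {R S : Type*} [Semiring R] [Semiring S] (f : R →+* S)
    (X : Matrix n n R) (k : ℕ) : (X ^ k).map f = (X.map f) ^ k := by
  induction k with
  | zero => rw [pow_zero, pow_zero, Matrix.map_one _ f.map_zero f.map_one]
  | succ k ih => rw [pow_succ, pow_succ, Matrix.map_mul, ih]

lemma auxMemKerMap (X : Matrix n n ℝ) (x : n → ℂ) :
    x ∈ LinearMap.ker (X.map (algebraMap ℝ ℂ)).mulVecLin ↔
      (fun i => (x i).re) ∈ LinearMap.ker X.mulVecLin ∧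
      (fun i => (x i).im) ∈ LinearMap.ker X.mulVecLin := by
  simp only [LinearMap.mem_ker, Matrix.mulVecLin_apply, funext_iff, Pi.zero_apply,
    Matrix.mulVec, dotProduct, Matrix.map_apply]
  rw [← forall_and]
  refine forall_congr' fun i => ?_
  rw [Complex.ext_iff]
  simp [Complex.re_sum, Complex.im_sum, Complex.mul_re, Complex.mul_im]

lemma auxNullityMap (X : Matrix n n ℝ) :
    Module.finrank ℂ (LinearMap.ker (X.map (algebraMap ℝ ℂ)).mulVecLin) =
      Module.finrank ℝ (LinearMap.ker X.mulVecLin) := by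
  set Kc := LinearMap.ker (X.map (algebraMap ℝ ℂ)).mulVecLin with hKc
  set Kr := LinearMap.ker X.mulVecLin with hKr
  let e : Kc ≃ₗ[ℝ] Kr × Kr :=
    { toFun := fun x => (⟨fun i => (x.1 i).re, ((auxMemKerMap X x.1).mp x.2).1⟩,
                         ⟨fun i => (x.1 i).im, ((auxMemKerMap X x.1).mp x.2).2⟩)
      map_add' := by
        intro a b
        refine Prod.ext (Subtype.ext ?_) (Subtype.ext ?_) <;> funext i <;> simp
      map_smul' := by
        intro r a
        refine Prod.ext (Subtype.ext ?_) (Subtype.ext ?_) <;> funext i <;>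
          simp [Complex.real_smul]
      invFun := fun y => ⟨fun i => ⟨y.1.1 i, y.2.1 i⟩,
        (auxMemKerMap X _).mpr ⟨y.1.2, y.2.2⟩⟩
      left_inv := fun x => by
        apply Subtype.ext; funext i; rfl
      right_inv := fun y => by
        refine Prod.ext (Subtype.ext ?_) (Subtype.ext ?_) <;> rfl }
  have h1 : Module.finrank ℝ ℂ * Module.finrank ℂ Kc = Module.finrank ℝ Kc :=
    Module.finrank_mul_finrank ℝ ℂ Kc
  rw [Complex.finrank_real_complex] at h1
  have h2 : Module.finrank ℝ Kc = Module.finrank ℝ Kr + Module.finrank ℝ Kr := by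
    rw [e.finrank_eq, Module.finrank_prod]
  omega

lemma auxFinrankBiSup {K V : Type*} [Field K] [AddCommGroup V] [Module K V]
    [FiniteDimensional K V] {ι : Type*} [DecidableEq ι] (g : ι → Submodule K V)
    (hg : iSupIndep g) (s : Finset ι) :
    Module.finrank K ↥(⨆ μ ∈ s, g μ) = ∑ μ ∈ s, Module.finrank K (g μ) := by
  induction s using Finset.induction_on with
  | empty => simp
  | @insert a s ha ih =>
    rw [Finset.sum_insert ha, ← ih]
    have hsup : (⨆ μ ∈ insert a s, g μ) = g a ⊔ ⨆ μ ∈ s, g μ :=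
      Finset.iSup_insert a s g
    have hdis : Disjoint (g a) (⨆ μ ∈ s, g μ) := by
      refine (hg a).mono_right ?_
      exact iSup₂_le fun μ hμ => le_iSup₂ (f := fun b (_ : b ≠ a) => g b) μ
        (fun h => ha (h ▸ hμ))
    have hkey := Submodule.finrank_sup_add_finrank_inf_eq (g a) (⨆ μ ∈ s, g μ)
    rw [hdis.eq_bot, finrank_bot, add_zero] at hkey
    rw [hsup, hkey]

end Aux

/-- If `A` is real symmetric `2p × 2p` with odd-dimensional kernel and the spectrum of `JA`
is purely imaginary, then the generalized kernel `ker (JA)^{2p}` is strictly larger than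
`ker (JA)`; in particular `JA` is not diagonalizable (hence linearly unstable). -/
theorem stmt2 (p : ℕ) (A : Matrix (Fin p ⊕ Fin p) (Fin p ⊕ Fin p) ℝ)
    (hA : A.IsSymm)
    (J : Matrix (Fin p ⊕ Fin p) (Fin p ⊕ Fin p) ℝ)
    (hJ : J = Matrix.fromBlocks 0 (-1) 1 0)
    (hodd : Odd (Module.finrank ℝ (LinearMap.ker (Matrix.toLin' A))))
    (hspec : ∀ μ ∈ spectrum ℂ ((J * A).map (algebraMap ℝ ℂ)), μ.re = 0) :
    LinearMap.ker (Matrix.toLin' (J * A))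
      < LinearMap.ker (Matrix.toLin' ((J * A) ^ (2 * p))) ∧
    ¬ ∃ (P : Matrix (Fin p ⊕ Fin p) (Fin p ⊕ Fin p) ℂ) (d : Fin p ⊕ Fin p → ℂ),
        IsUnit P ∧ (J * A).map (algebraMap ℝ ℂ) = P * Matrix.diagonal d * P⁻¹ := by
  classical
  set B := J * A with hB
  set M := B.map (algebraMap ℝ ℂ) with hM
  rw [Matrix.toLin'_apply'] at hodd
  rw [Matrix.toLin'_apply', Matrix.toLin'_apply']
  -- J is invertible:  (-J) * J = 1
  have hJJ : (-J) * J = 1 := by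
    subst hJ
    rw [← Matrix.fromBlocks_one (l := Fin p) (m := Fin p)]
    simp [Matrix.fromBlocks_multiply, Matrix.fromBlocks_neg]
  have hkerB : LinearMap.ker B.mulVecLin = LinearMap.ker A.mulVecLin := by
    ext x
    simp only [LinearMap.mem_ker, Matrix.mulVecLin_apply]
    constructor
    · intro h
      have h2 : (-J).mulVec (B.mulVec x) = 0 := by rw [h, Matrix.mulVec_zero]
      rwa [hB, Matrix.mulVec_mulVec, ← Matrix.mul_assoc, hJJ, Matrix.one_mul] at h2
    · intro h
      rw [hB, ← Matrix.mulVec_mulVec, h, Matrix.mulVec_zero]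
  have hodd' : Odd (Module.finrank ℝ (LinearMap.ker B.mulVecLin)) := by
    rwa [hkerB]
  have hNcard : Fintype.card (Fin p ⊕ Fin p) = 2 * p := by
    simp [two_mul]
  have hp1 : 1 ≤ 2 * p := by
    have h1 : Module.finrank ℝ (LinearMap.ker B.mulVecLin)
        ≤ Module.finrank ℝ ((Fin p ⊕ Fin p) → ℝ) := Submodule.finrank_le _
    rw [Module.finrank_pi, hNcard] at h1
    obtain ⟨k, hk⟩ := hodd'
    omega
  have hmap_pow : ∀ k : ℕ, (B ^ k).map (algebraMap ℝ ℂ) = M ^ k := fun k =>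
    auxMapPow (algebraMap ℝ ℂ) B k
  -- complex endomorphism
  set f := M.mulVecLin with hf
  have hφ : ∀ Y : Matrix (Fin p ⊕ Fin p) (Fin p ⊕ Fin p) ℂ,
      (Matrix.toLinAlgEquiv' Y : Module.End ℂ ((Fin p ⊕ Fin p) → ℂ)) = Y.mulVecLin :=
    fun Y => LinearMap.ext fun v => by
      rw [Matrix.toLinAlgEquiv'_apply, Matrix.mulVecLin_apply]
  have hfinrank_pi : Module.finrank ℂ ((Fin p ⊕ Fin p) → ℂ) = 2 * p := by
    rw [Module.finrank_pi, hNcard]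
  have hgen : ∀ μ : ℂ, (Module.End.maxGenEigenspace f μ)
      = LinearMap.ker ((M - μ • 1) ^ (2 * p)).mulVecLin := by
    intro μ
    rw [Module.End.maxGenEigenspace_eq_genEigenspace_finrank, hfinrank_pi,
      Module.End.genEigenspace_nat]
    have h2 : (Matrix.toLinAlgEquiv' (M - μ • 1) : Module.End ℂ ((Fin p ⊕ Fin p) → ℂ))
        = f - μ • 1 := by
      rw [_root_.map_sub, _root_.map_smul, _root_.map_one, hφ M]
    rw [← h2, ← map_pow, hφ]
  have hspec_f : ∀ μ : ℂ, Module.End.HasEigenvalue f μ ↔ μ ∈ spectrum ℂ M := by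
    intro μ
    have h := AlgEquiv.spectrum_eq
      (Matrix.toLinAlgEquiv' : Matrix (Fin p ⊕ Fin p) (Fin p ⊕ Fin p) ℂ ≃ₐ[ℂ] _) M
    rw [hφ M] at h
    rw [Module.End.hasEigenvalue_iff_mem_spectrum, h]
  have hbot : ∀ μ : ℂ, Module.End.maxGenEigenspace f μ ≠ ⊥ ↔ μ ∈ spectrum ℂ M := by
    intro μ
    rw [← hspec_f]
    constructor
    · intro h
      rw [Module.End.maxGenEigenspace_eq_genEigenspace_finrank, hfinrank_pi] at h
      exact Module.End.hasEigenvalue_of_hasGenEigenvalue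
        (Module.End.hasGenEigenvalue_iff.mpr h)
    · intro h hcon
      have hle : Module.End.eigenspace f μ ≤ Module.End.maxGenEigenspace f μ :=
        (Module.End.genEigenspace f μ).monotone le_top
      exact (Module.End.hasEigenvalue_iff.mp h) (le_bot_iff.mp (hcon ▸ hle))
  set d : ℂ → ℕ := fun μ => Module.finrank ℂ (Module.End.maxGenEigenspace f μ) with hd
  have hdeq : ∀ ν : ℂ, d ν
      = Module.finrank ℂ (LinearMap.ker ((M - ν • 1) ^ (2 * p)).mulVecLin) := fun ν =>
    congrArg (fun S : Submodule ℂ ((Fin p ⊕ Fin p) → ℂ) => Module.finrank ℂ S) (hgen ν)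
  have hrank_d : ∀ μ : ℂ, ((M - μ • 1) ^ (2 * p)).rank + d μ = 2 * p := by
    intro μ
    have h := auxRankNullity ℂ ((M - μ • 1) ^ (2 * p))
    rw [hNcard] at h
    rw [hdeq μ]
    exact h
  have hconjM : M.map (starRingEnd ℂ) = M := by
    ext i j
    simp [hM, Matrix.map_apply, Complex.conj_ofReal]
  have hdneg : ∀ μ : ℂ, μ.re = 0 → d (-μ) = d μ := by
    intro μ hre
    have hcμ : (starRingEnd ℂ) μ = -μ := by
      apply Complex.ext <;> simp [hre]
    have hM' : ∀ i j, (starRingEnd ℂ) (M i j) = M i j := by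
      intro i j
      have h := congrFun (congrFun hconjM i) j
      simpa [Matrix.map_apply] using h
    have h1 : (M - μ • 1).map (starRingEnd ℂ) = M - (-μ) • 1 := by
      ext i j
      simp only [Matrix.map_apply, Matrix.sub_apply, Matrix.smul_apply, Matrix.one_apply,
        smul_eq_mul, _root_.map_sub, _root_.map_mul, hcμ, hM' i j,
        apply_ite (starRingEnd ℂ), _root_.map_one, _root_.map_zero]
    have hmapsub : ((M - μ • 1) ^ (2 * p)).map (starRingEnd ℂ) = (M - (-μ) • 1) ^ (2 * p) := by
      rw [auxMapPow ((starRingEnd ℂ) : ℂ →+* ℂ), h1]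
    have h2 := auxConjRank ((M - μ • 1) ^ (2 * p))
    rw [hmapsub] at h2
    have h3 := hrank_d μ
    have h4 := hrank_d (-μ)
    omega
  set s : Finset ℂ := insert 0 (M.finite_spectrum.toFinset) with hs
  have hmem_s : ∀ μ : ℂ, μ ∈ spectrum ℂ M → μ ∈ s := fun μ h =>
    Finset.mem_insert_of_mem ((Set.Finite.mem_toFinset _).mpr h)
  have hsup_s : ⨆ μ ∈ s, Module.End.maxGenEigenspace f μ = ⊤ := by
    rw [eq_top_iff, ← Module.End.iSup_maxGenEigenspace_eq_top f]
    refine iSup_le fun μ => ?_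
    by_cases h : Module.End.maxGenEigenspace f μ = ⊥
    · rw [h]; exact bot_le
    · exact le_iSup₂ (f := fun μ (_ : μ ∈ s) => Module.End.maxGenEigenspace f μ) μ
        (hmem_s μ ((hbot μ).mp h))
  have hNsum : 2 * p = ∑ μ ∈ s, d μ := by
    have h := auxFinrankBiSup (fun μ => Module.End.maxGenEigenspace f μ)
      (Module.End.independent_maxGenEigenspace f) s
    rw [hsup_s, finrank_top, hfinrank_pi] at h
    exact h
  set t := s.erase 0 with ht
  have h0s : (0 : ℂ) ∈ s := Finset.mem_insert_self _ _
  have hsum_split : ∑ μ ∈ s, d μ = d 0 + ∑ μ ∈ t, d μ := (Finset.add_sum_erase s d h0s).symm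
  have ht_spec : ∀ μ ∈ t, μ ∈ spectrum ℂ M ∧ μ ≠ 0 := by
    intro μ hμ
    obtain ⟨hne, hmem⟩ := Finset.mem_erase.mp hμ
    refine ⟨?_, hne⟩
    rcases Finset.mem_insert.mp hmem with h | h
    · exact absurd h hne
    · exact (Set.Finite.mem_toFinset _).mp h
  have ht_neg : ∀ μ ∈ t, -μ ∈ t ∧ d (-μ) = d μ ∧ μ.im ≠ 0 := by
    intro μ hμ
    obtain ⟨hsp, hne⟩ := ht_spec μ hμ
    have hre : μ.re = 0 := hspec μ hsp
    have hd' := hdneg μ hre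
    have him : μ.im ≠ 0 := fun h => hne (by apply Complex.ext <;> simp [hre, h])
    refine ⟨?_, hd', him⟩
    have hdμ : d μ ≠ 0 := by
      have hb : Module.End.maxGenEigenspace f μ ≠ ⊥ := (hbot μ).mpr hsp
      intro h0
      exact hb (Submodule.finrank_eq_zero.mp h0)
    have hbneg : Module.End.maxGenEigenspace f (-μ) ≠ ⊥ := fun h0 =>
      hdμ (by rw [← hd']; exact Submodule.finrank_eq_zero.mpr h0)
    exact Finset.mem_erase.mpr ⟨neg_ne_zero.mpr hne, hmem_s _ ((hbot _).mp hbneg)⟩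
  have heven : Even (∑ μ ∈ t, d μ) := by
    rw [← Finset.sum_filter_add_sum_filter_not t (fun μ => 0 < μ.im) d]
    have hswap : ∑ μ ∈ t.filter (fun μ => ¬ 0 < μ.im), d μ
        = ∑ μ ∈ t.filter (fun μ => 0 < μ.im), d μ := by
      refine Finset.sum_nbij' (fun μ => -μ) (fun μ => -μ) ?_ ?_ ?_ ?_ ?_
      · intro a ha
        obtain ⟨hat, hnpos⟩ := Finset.mem_filter.mp ha
        obtain ⟨hmem, _, him⟩ := ht_neg a hat
        refine Finset.mem_filter.mpr ⟨hmem, ?_⟩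
        simp only [Complex.neg_im]
        rcases lt_or_gt_of_ne him with h | h
        · linarith
        · exact absurd h (by simpa using hnpos)
      · intro a ha
        obtain ⟨hat, hpos⟩ := Finset.mem_filter.mp ha
        obtain ⟨hmem, _, _⟩ := ht_neg a hat
        refine Finset.mem_filter.mpr ⟨hmem, ?_⟩
        simp only [Complex.neg_im]
        linarith
      · intro a _; simp
      · intro a _; simp
      · intro a ha
        exact ((ht_neg a (Finset.mem_filter.mp ha).1).2.1).symm
    rw [hswap]
    exact ⟨_, rfl⟩
  have heven0 : Even (d 0) := by
    have h2 : Even (2 * p) := even_two_mul p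
    rw [hNsum, hsum_split] at h2
    exact (Nat.even_add.mp h2).mpr heven
  have hg_eq : Module.finrank ℝ (LinearMap.ker (B ^ (2 * p)).mulVecLin) = d 0 := by
    rw [← auxNullityMap (B ^ (2 * p)), hmap_pow, hdeq 0,
      show M - (0 : ℂ) • 1 = M by simp]
  -- Part 1
  have hle : LinearMap.ker B.mulVecLin ≤ LinearMap.ker (B ^ (2 * p)).mulVecLin := by
    intro x hx
    rw [LinearMap.mem_ker, Matrix.mulVecLin_apply] at hx ⊢
    obtain ⟨k, hk⟩ : ∃ k, 2 * p = k + 1 := ⟨2 * p - 1, by omega⟩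
    rw [hk, pow_succ, ← Matrix.mulVec_mulVec, hx, Matrix.mulVec_zero]
  have hne : LinearMap.ker B.mulVecLin ≠ LinearMap.ker (B ^ (2 * p)).mulVecLin := by
    intro h
    rw [h, hg_eq] at hodd'
    exact (Nat.not_odd_iff_even.mpr heven0) hodd'
  have hlt : LinearMap.ker B.mulVecLin < LinearMap.ker (B ^ (2 * p)).mulVecLin :=
    lt_of_le_of_ne hle hne
  refine ⟨hlt, ?_⟩
  -- Part 2
  rintro ⟨P, dv, hP, hPD⟩
  have hdet : IsUnit P.det := (Matrix.isUnit_iff_isUnit_det P).mp hP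
  have hdetinv : IsUnit (P⁻¹).det := Matrix.isUnit_nonsing_inv_det P hdet
  have hrank_conj : ∀ Y : Matrix (Fin p ⊕ Fin p) (Fin p ⊕ Fin p) ℂ,
      (P * Y * P⁻¹).rank = Y.rank := by
    intro Y
    rw [Matrix.mul_assoc, Matrix.rank_mul_eq_right_of_isUnit_det P _ hdet,
      Matrix.rank_mul_eq_left_of_isUnit_det P⁻¹ Y hdetinv]
  have hPinv : (↑(hP.unit⁻¹) : Matrix (Fin p ⊕ Fin p) (Fin p ⊕ Fin p) ℂ) = P⁻¹ := by
    rw [Matrix.coe_units_inv, hP.unit_spec]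
  have hpow : M ^ (2 * p) = P * (Matrix.diagonal dv) ^ (2 * p) * P⁻¹ := by
    have h := Units.conj_pow hP.unit (Matrix.diagonal dv) (2 * p)
    rw [hP.unit_spec, hPinv] at h
    rw [hPD, h]
  have hrank_eq : M.rank = (M ^ (2 * p)).rank := by
    rw [hpow, hPD, hrank_conj, hrank_conj, Matrix.diagonal_pow,
      Matrix.rank_diagonal, Matrix.rank_diagonal]
    refine Fintype.card_congr (Equiv.subtypeEquivRight fun i => ?_)
    simp only [Pi.pow_apply]
    exact (not_congr (pow_eq_zero_iff (show 2 * p ≠ 0 by omega))).symm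
  have h1 := auxRankNullity ℂ M
  have h2 := auxRankNullity ℂ (M ^ (2 * p))
  rw [← hrank_eq] at h2
  have h3 : Module.finrank ℂ (LinearMap.ker M.mulVecLin)
      = Module.finrank ℂ (LinearMap.ker (M ^ (2 * p)).mulVecLin) := by omega
  have h4 := auxNullityMap B
  have h5 := auxNullityMap (B ^ (2 * p))
  rw [hmap_pow] at h5
  rw [← hM] at h4
  have h6 : Module.finrank ℝ (LinearMap.ker B.mulVecLin)
      = Module.finrank ℝ (LinearMap.ker (B ^ (2 * p)).mulVecLin) := by
    rw [← h4, ← h5, h3]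
  have h7 := Submodule.finrank_lt_finrank_of_lt hlt
  omega
end

section
/- Let H be a finite-dimensional complex Hilbert space, S self-adjoint and L an operator with SL self-adjoint, and let m be such that H = ker(L^m) ⊕ im(L^m) (Fitting decomposition). Then this decomposition is S-orthogonal: for every x ∈ ker(L^m) and y ∈ im(L^m), ⟨S x, y⟩ = 0. -/
lemma key {E : Type*} [NormedAddCommGroup E] [InnerProductSpace ℂ E]
    (S L : E →ₗ[ℂ] E) (hS : S.IsSymmetric) (hSL : (S ∘ₗ L).IsSymmetric)
    (n : ℕ) (x z : E) :
    (inner ℂ (S x) ((L ^ n) z) : ℂ) = inner ℂ (S ((L ^ n) x)) z := by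
  induction n generalizing z with
  | zero => simp
  | succ n ih =>
    have h1 : (L ^ (n + 1)) z = (L ^ n) (L z) := by
      rw [pow_succ]; rfl
    have h2 : (L ^ (n + 1)) x = L ((L ^ n) x) := by
      rw [pow_succ']; rfl
    rw [h1, ih (L z), h2]
    calc (inner ℂ (S ((L ^ n) x)) (L z) : ℂ)
        = inner ℂ ((L ^ n) x) (S (L z)) := hS _ _
      _ = inner ℂ ((L ^ n) x) ((S ∘ₗ L) z) := rfl
      _ = inner ℂ ((S ∘ₗ L) ((L ^ n) x)) z := (hSL _ _).symm
      _ = inner ℂ (S (L ((L ^ n) x))) z := rfl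

/-- If `S` is self-adjoint, `SL` is self-adjoint, and `H = ker (L^m) ⊕ im (L^m)` is the
Fitting decomposition, then this decomposition is `S`-orthogonal: `⟨S x, y⟩ = 0` for all
`x ∈ ker (L^m)` and `y ∈ im (L^m)`. -/
theorem stmt4 {E : Type*} [NormedAddCommGroup E] [InnerProductSpace ℂ E]
    [FiniteDimensional ℂ E] (S L : E →ₗ[ℂ] E)
    (hS : S.IsSymmetric) (hSL : (S ∘ₗ L).IsSymmetric)
    (m : ℕ) (hm : 0 < m)
    (hFitting : IsCompl (LinearMap.ker (L ^ m)) (LinearMap.range (L ^ m))) :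
    ∀ x ∈ LinearMap.ker (L ^ m), ∀ y ∈ LinearMap.range (L ^ m),
      (inner ℂ (S x) y : ℂ) = 0 := by
  intro x hx y hy
  obtain ⟨z, rfl⟩ := hy
  rw [key S L hS hSL m x z, LinearMap.mem_ker.mp hx]
  simp
end

section
/- Let S be self-adjoint and L nilpotent on a finite-dimensional complex Hilbert space with SL self-adjoint. Then for all sufficiently small ε > 0, the spectral flow of the path t ↦ SL + tS on [−ε, ε] equals the signature of S. -/
open LinearMap

/-- The Morse index (number of negative eigenvalues counted with multiplicity) of a
self-adjoint operator on a finite-dimensional complex Hilbert space. -/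
noncomputable def opNegIdx {E : Type*} [NormedAddCommGroup E] [InnerProductSpace ℂ E]
    [FiniteDimensional ℂ E] (T : E →ₗ[ℂ] E) : ℕ :=
  sSup {d | ∃ W : Submodule ℂ E, Module.finrank ℂ W = d ∧
    ∀ x ∈ W, x ≠ 0 → (inner ℂ (T x) x : ℂ).re < 0}

/-- The Morse coindex (number of positive eigenvalues counted with multiplicity). -/
noncomputable def opPosIdx {E : Type*} [NormedAddCommGroup E] [InnerProductSpace ℂ E]
    [FiniteDimensional ℂ E] (T : E →ₗ[ℂ] E) : ℕ :=
  sSup {d | ∃ W : Submodule ℂ E, Module.finrank ℂ W = d ∧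
    ∀ x ∈ W, x ≠ 0 → 0 < (inner ℂ (T x) x : ℂ).re}

section Aux

open Polynomial Finset

noncomputable def sqc : ℕ → ℝ
  | 0 => 1
  | (n+1) => ((if n + 1 = 1 then 1 else 0) -
      ∑ j ∈ (Finset.range n).attach, sqc (j.1 + 1) * sqc (n - j.1)) / 2
decreasing_by
  all_goals (first
    | (have hj := j.2; rw [Finset.mem_range] at hj; omega)
    | omega)

lemma sqc_zero : sqc 0 = 1 := by rw [sqc]

lemma sqc_conv (m : ℕ) :
    ∑ i ∈ Finset.range (m + 1), sqc i * sqc (m - i) = if m ≤ 1 then 1 else 0 := by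
  cases m with
  | zero => simp [sqc]
  | succ n =>
    rw [Finset.sum_range_succ, Finset.sum_range_succ']
    have h1 : ∀ j ∈ Finset.range n, sqc (j + 1) * sqc (n + 1 - (j + 1)) =
        sqc (j + 1) * sqc (n - j) := by
      intro j hj; congr 2; omega
    rw [Finset.sum_congr rfl h1]
    have h2 : sqc (n + 1) = ((if n + 1 = 1 then 1 else 0) -
        ∑ j ∈ (Finset.range n).attach, sqc (j.1 + 1) * sqc (n - j.1)) / 2 := by
      rw [sqc]
    rw [Finset.sum_attach (Finset.range n) (fun j => sqc (j + 1) * sqc (n - j))] at h2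
    have hc : (if n + 1 ≤ 1 then (1:ℝ) else 0) = if n + 1 = 1 then 1 else 0 := by
      simp only [show (n + 1 ≤ 1) = (n + 1 = 1) from propext (by omega)]
    simp only [Nat.sub_self, Nat.sub_zero, sqc_zero, one_mul, mul_one]
    rw [hc, h2]; ring

noncomputable def sqPoly (K : ℕ) : Polynomial ℂ :=
  ∑ i ∈ Finset.range K, Polynomial.C ((sqc i : ℝ) : ℂ) * Polynomial.X ^ i

lemma sqPoly_coeff (K m : ℕ) :
    (sqPoly K).coeff m = if m < K then ((sqc m : ℝ) : ℂ) else 0 := by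
  unfold sqPoly
  rw [Polynomial.finset_sum_coeff]
  simp only [Polynomial.coeff_C_mul, Polynomial.coeff_X_pow, mul_ite, mul_one, mul_zero]
  rw [Finset.sum_ite_eq (Finset.range K) m (fun i => ((sqc i : ℝ) : ℂ))]
  simp [Finset.mem_range]

lemma sqPoly_sq (K : ℕ) (hK : 2 ≤ K) :
    Polynomial.X ^ K ∣ sqPoly K * sqPoly K - (1 + Polynomial.X) := by
  rw [Polynomial.X_pow_dvd_iff]
  intro d hd
  rw [Polynomial.coeff_sub, Polynomial.coeff_mul,
    Finset.Nat.sum_antidiagonal_eq_sum_range_succ_mk]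
  have h1 : ∀ i ∈ Finset.range (d + 1), (sqPoly K).coeff i * (sqPoly K).coeff (d - i)
      = ((sqc i * sqc (d - i) : ℝ) : ℂ) := by
    intro i hi
    rw [Finset.mem_range] at hi
    rw [sqPoly_coeff, sqPoly_coeff, if_pos (by omega), if_pos (by omega)]
    push_cast; ring
  rw [Finset.sum_congr rfl h1, ← Complex.ofReal_sum, sqc_conv d]
  rw [Polynomial.coeff_add, Polynomial.coeff_one, Polynomial.coeff_X]
  split
  · rename_i h
    interval_cases d <;> norm_num
  · rename_i h
    have hd0 : d ≠ 0 := by omega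
    have hd1 : d ≠ 1 := by omega
    simp [hd0, Ne.symm hd1]

lemma sqPoly_sub_one (K : ℕ) (hK : 1 ≤ K) : Polynomial.X ∣ sqPoly K - 1 := by
  rw [Polynomial.X_dvd_iff, Polynomial.coeff_sub, sqPoly_coeff, if_pos (by omega),
    Polynomial.coeff_one]
  simp [sqc_zero]

variable {E : Type*} [NormedAddCommGroup E] [InnerProductSpace ℂ E] [FiniteDimensional ℂ E]

lemma isSymmetric_comp_pow (S N : E →ₗ[ℂ] E) (hS : S.IsSymmetric)
    (hSN : (S ∘ₗ N).IsSymmetric) : ∀ i, (S ∘ₗ N ^ i).IsSymmetric := by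
  intro i
  induction i with
  | zero => simpa [Module.End.one_eq_id] using hS
  | succ i ih =>
    intro x y
    have e1 : (N ^ (i + 1)) x = N ((N ^ i) x) := by rw [pow_succ']; rfl
    have e2 : (N ^ (i + 1)) y = (N ^ i) (N y) := by rw [pow_succ]; rfl
    simp only [LinearMap.comp_apply, e1, e2]
    calc (inner ℂ (S (N ((N ^ i) x))) y : ℂ)
        = inner ℂ ((S ∘ₗ N) ((N ^ i) x)) y := rfl
      _ = inner ℂ ((N ^ i) x) ((S ∘ₗ N) y) := hSN _ y
      _ = inner ℂ (S ((N ^ i) x)) (N y) := (hS _ _).symm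
      _ = inner ℂ ((S ∘ₗ N ^ i) x) (N y) := rfl
      _ = inner ℂ x ((S ∘ₗ N ^ i) (N y)) := ih x (N y)
      _ = inner ℂ x (S ((N ^ i) (N y))) := rfl

/-- Key square-root congruence lemma. -/
lemma key_sqrt (S N : E →ₗ[ℂ] E) (hS : S.IsSymmetric) (hSN : (S ∘ₗ N).IsSymmetric)
    (hN : IsNilpotent N) :
    ∃ R : E →ₗ[ℂ] E, Function.Bijective R ∧
      adjoint R ∘ₗ S ∘ₗ R = S ∘ₗ (1 + N) := by
  obtain ⟨k, hk⟩ := hN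
  set K := k + 2 with hKdef
  have hK2 : 2 ≤ K := by omega
  have hNK : N ^ K = 0 := by
    rw [hKdef, pow_add, hk, zero_mul]
  set R : E →ₗ[ℂ] E := Polynomial.aeval N (sqPoly K) with hRdef
  -- R as an explicit sum
  have hRsum : R = ∑ i ∈ Finset.range K, ((sqc i : ℝ) : ℂ) • N ^ i := by
    rw [hRdef]
    unfold sqPoly
    rw [map_sum]
    refine Finset.sum_congr rfl fun i _ => ?_
    rw [map_mul, Polynomial.aeval_C, map_pow, Polynomial.aeval_X, Algebra.smul_def]
  -- S ∘ R is symmetric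
  have hSR : (S ∘ₗ R).IsSymmetric := by
    rw [hRsum]
    have hdist : S ∘ₗ (∑ i ∈ Finset.range K, ((sqc i : ℝ) : ℂ) • N ^ i)
        = ∑ i ∈ Finset.range K, ((sqc i : ℝ) : ℂ) • (S ∘ₗ N ^ i) := by
      rw [← Module.End.mul_eq_comp, Finset.mul_sum]
      refine Finset.sum_congr rfl fun i _ => ?_
      rw [mul_smul_comm, Module.End.mul_eq_comp]
    rw [hdist]
    refine Finset.sum_induction _ _ (fun a b ha hb => ha.add hb) (LinearMap.IsSymmetric.zero) ?_
    intro i _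
    exact LinearMap.IsSymmetric.smul (Complex.conj_ofReal _) (isSymmetric_comp_pow S N hS hSN i)
  -- R * R = 1 + N
  have hR2 : R * R = 1 + N := by
    obtain ⟨w, hw⟩ := sqPoly_sq K hK2
    have := congrArg (Polynomial.aeval N) hw
    rw [map_sub, map_mul, map_mul, map_pow, Polynomial.aeval_X, hNK, zero_mul, map_add,
      map_one, Polynomial.aeval_X] at this
    rw [← hRdef] at this
    have h0 : R * R - (1 + N) = 0 := this
    linear_combination (norm := module) h0
  -- R is bijective
  have hRnil : IsNilpotent (R - 1) := by
    refine ⟨K, ?_⟩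
    obtain ⟨w, hw⟩ := sqPoly_sub_one K (by omega)
    have hdvd : Polynomial.X ^ K ∣ (sqPoly K - 1) ^ K := by
      calc Polynomial.X ^ K ∣ (Polynomial.X * w) ^ K := by
            rw [mul_pow]; exact Dvd.intro _ rfl
        _ = (sqPoly K - 1) ^ K := by rw [← hw]
    obtain ⟨v, hv⟩ := hdvd
    have : R - 1 = Polynomial.aeval N (sqPoly K - 1) := by
      rw [map_sub, map_one, hRdef]
    rw [this, ← map_pow, hv, map_mul, map_pow, Polynomial.aeval_X, hNK, zero_mul]
  have hRbij : Function.Bijective R := by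
    have : IsUnit R := by
      have := IsNilpotent.isUnit_one_add hRnil
      rwa [add_sub_cancel] at this
    exact (Module.End.isUnit_iff R).mp this
  -- adjoint relation
  refine ⟨R, hRbij, ?_⟩
  have hadj : adjoint R ∘ₗ S = S ∘ₗ R := by
    have h1 : adjoint (S ∘ₗ R) = S ∘ₗ R := by
      rw [← LinearMap.star_eq_adjoint]
      exact ((LinearMap.isSymmetric_iff_isSelfAdjoint _).mp hSR).star_eq
    rw [LinearMap.adjoint_comp] at h1
    have hSadj : adjoint S = S := by
      rw [← LinearMap.star_eq_adjoint]
      exact ((LinearMap.isSymmetric_iff_isSelfAdjoint _).mp hS).star_eq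
    rwa [hSadj] at h1
  calc adjoint R ∘ₗ S ∘ₗ R = (adjoint R ∘ₗ S) ∘ₗ R := by rw [LinearMap.comp_assoc]
    _ = (S ∘ₗ R) ∘ₗ R := by rw [hadj]
    _ = S ∘ₗ (R * R) := by rw [LinearMap.comp_assoc]; rfl
    _ = S ∘ₗ (1 + N) := by rw [hR2]

lemma opNegIdx_congr (T T' : E →ₗ[ℂ] E)
    (h : ∀ x : E, ((inner ℂ (T x) x : ℂ).re < 0 ↔ (inner ℂ (T' x) x : ℂ).re < 0)) :
    opNegIdx T = opNegIdx T' := by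
  unfold opNegIdx; congr 1; ext d
  simp only [Set.mem_setOf_eq]
  constructor
  · rintro ⟨W, h1, h2⟩; exact ⟨W, h1, fun x hx hx0 => (h x).mp (h2 x hx hx0)⟩
  · rintro ⟨W, h1, h2⟩; exact ⟨W, h1, fun x hx hx0 => (h x).mpr (h2 x hx hx0)⟩

lemma opNegIdx_eq_opPosIdx (T T' : E →ₗ[ℂ] E)
    (h : ∀ x : E, ((inner ℂ (T x) x : ℂ).re < 0 ↔ 0 < (inner ℂ (T' x) x : ℂ).re)) :
    opNegIdx T = opPosIdx T' := by
  unfold opNegIdx opPosIdx; congr 1; ext d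
  simp only [Set.mem_setOf_eq]
  constructor
  · rintro ⟨W, h1, h2⟩; exact ⟨W, h1, fun x hx hx0 => (h x).mp (h2 x hx hx0)⟩
  · rintro ⟨W, h1, h2⟩; exact ⟨W, h1, fun x hx hx0 => (h x).mpr (h2 x hx hx0)⟩

lemma opNegIdx_conj (T R : E →ₗ[ℂ] E) (hR : Function.Bijective R) :
    opNegIdx (adjoint R ∘ₗ T ∘ₗ R) = opNegIdx T := by
  unfold opNegIdx; congr 1; ext d
  simp only [Set.mem_setOf_eq]
  set e := LinearEquiv.ofBijective R hR with he
  have hcoe : ∀ z : E, e z = R z := fun z => rfl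
  constructor
  · rintro ⟨W, rfl, h2⟩
    refine ⟨W.map (e : E →ₗ[ℂ] E), LinearEquiv.finrank_map_eq e W, ?_⟩
    intro x hx hx0
    obtain ⟨y, hy, rfl⟩ := Submodule.mem_map.mp hx
    have hy0 : y ≠ 0 := fun h => hx0 (by rw [h, map_zero])
    have h3 := h2 y hy hy0
    have h4 : (inner ℂ ((adjoint R ∘ₗ T ∘ₗ R) y) y : ℂ) = inner ℂ (T (R y)) (R y) := by
      simp only [LinearMap.comp_apply]
      exact LinearMap.adjoint_inner_left R y (T (R y))
    rw [h4] at h3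
    exact h3
  · rintro ⟨W, rfl, h2⟩
    refine ⟨W.map (e.symm : E →ₗ[ℂ] E), LinearEquiv.finrank_map_eq e.symm W, ?_⟩
    intro x hx hx0
    obtain ⟨y, hy, rfl⟩ := Submodule.mem_map.mp hx
    have hy0 : y ≠ 0 := fun h => hx0 (by rw [h, map_zero])
    have h4 : (inner ℂ ((adjoint R ∘ₗ T ∘ₗ R) (e.symm y)) (e.symm y) : ℂ)
        = inner ℂ (T (R (e.symm y))) (R (e.symm y)) := by
      simp only [LinearMap.comp_apply]
      exact LinearMap.adjoint_inner_left R (e.symm y) (T (R (e.symm y)))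
    have h5 : R (e.symm y) = y := by
      rw [← hcoe]; exact e.apply_symm_apply y
    show (inner ℂ ((adjoint R ∘ₗ T ∘ₗ R) (e.symm y)) (e.symm y) : ℂ).re < 0
    rw [h4, h5]
    exact h2 y hy hy0

lemma opNegIdx_shift (S L : E →ₗ[ℂ] E) (hS : S.IsSymmetric)
    (hSL : (S ∘ₗ L).IsSymmetric) (hL : IsNilpotent L) (t : ℝ) (ht : t ≠ 0) :
    opNegIdx (S ∘ₗ L + (t : ℂ) • S) = opNegIdx ((t : ℂ) • S) := by
  set c : ℂ := (t : ℂ) with hcdef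
  have hc : c ≠ 0 := Complex.ofReal_ne_zero.mpr ht
  set N : E →ₗ[ℂ] E := c⁻¹ • L with hNdef
  have hNnil : IsNilpotent N := by
    obtain ⟨k, hk⟩ := hL
    exact ⟨k, by rw [hNdef, _root_.smul_pow, hk, smul_zero]⟩
  have hSN : (S ∘ₗ N).IsSymmetric := by
    have hcomp : S ∘ₗ N = c⁻¹ • (S ∘ₗ L) := by
      ext x
      simp [hNdef, LinearMap.comp_apply, map_smul]
    rw [hcomp]
    refine LinearMap.IsSymmetric.smul ?_ hSL
    rw [hcdef, map_inv₀, Complex.conj_ofReal]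
  obtain ⟨R, hRbij, hRe⟩ := key_sqrt S N hS hSN hNnil
  have heq : S ∘ₗ L + c • S = adjoint R ∘ₗ (c • S) ∘ₗ R := by
    have h1 : adjoint R ∘ₗ (c • S) ∘ₗ R = c • (adjoint R ∘ₗ S ∘ₗ R) := by
      ext x
      simp [LinearMap.smul_apply, LinearMap.comp_apply, map_smul]
    rw [h1, hRe]
    ext x
    simp only [LinearMap.add_apply, LinearMap.comp_apply, LinearMap.smul_apply,
      LinearMap.add_apply, Module.End.one_apply, hNdef, map_add, smul_add, map_smul]
    rw [smul_smul, mul_inv_cancel₀ hc, one_smul]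
    abel
  rw [heq, opNegIdx_conj _ _ hRbij]


lemma opNegIdx_smul_pos (T : E →ₗ[ℂ] E) {ε : ℝ} (hε : 0 < ε) :
    opNegIdx (((ε : ℝ) : ℂ) • T) = opNegIdx T := by
  refine opNegIdx_congr _ _ fun x => ?_
  have h : (inner ℂ ((((ε : ℝ) : ℂ) • T) x) x : ℂ).re = ε * (inner ℂ (T x) x : ℂ).re := by
    have e1 : ((((ε : ℝ) : ℂ)) • T) x = (((ε : ℝ) : ℂ)) • T x := rfl
    rw [e1, inner_smul_left, Complex.conj_ofReal]
    simp [Complex.mul_re]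
  rw [h]
  constructor <;> intro h1 <;> nlinarith

lemma opNegIdx_smul_neg (T : E →ₗ[ℂ] E) {ε : ℝ} (hε : 0 < ε) :
    opNegIdx (((-ε : ℝ) : ℂ) • T) = opPosIdx T := by
  refine opNegIdx_eq_opPosIdx _ _ fun x => ?_
  have h : (inner ℂ ((((-ε : ℝ) : ℂ) • T) x) x : ℂ).re = -ε * (inner ℂ (T x) x : ℂ).re := by
    have e1 : ((((-ε : ℝ) : ℂ)) • T) x = (((-ε : ℝ) : ℂ)) • T x := rfl
    rw [e1, inner_smul_left, Complex.conj_ofReal]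
    simp [Complex.mul_re]
  rw [h]
  constructor <;> intro h1 <;> nlinarith

end Aux

/-- If `S` is self-adjoint, `SL` is self-adjoint and `L` is nilpotent, then for all
sufficiently small `ε > 0` the spectral flow of `t ↦ SL + tS` on `[-ε, ε]`, i.e.
`n⁻(SL - εS) - n⁻(SL + εS)`, equals the signature `n⁺(S) - n⁻(S)` of `S`. -/
theorem stmt6 {E : Type*} [NormedAddCommGroup E] [InnerProductSpace ℂ E]
    [FiniteDimensional ℂ E] (S L : E →ₗ[ℂ] E)
    (hS : S.IsSymmetric) (hSL : (S ∘ₗ L).IsSymmetric) (hL : IsNilpotent L) :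
    ∃ ε₀ > (0 : ℝ), ∀ ε : ℝ, 0 < ε → ε ≤ ε₀ →
      (opNegIdx (S ∘ₗ L + ((-ε : ℝ) : ℂ) • S) : ℤ) - opNegIdx (S ∘ₗ L + (ε : ℂ) • S)
        = (opPosIdx S : ℤ) - opNegIdx S := by
  refine ⟨1, one_pos, fun ε hε _ => ?_⟩
  have h1 := opNegIdx_shift S L hS hSL hL (-ε) (by linarith)
  have h2 := opNegIdx_shift S L hS hSL hL ε (ne_of_gt hε)
  rw [h1, h2, opNegIdx_smul_pos S hε, opNegIdx_smul_neg S hε]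
end

section
/- Consider A = diag(−2, −1, 1, −1, 0, 0) as a symmetric 6×6 real matrix and J the standard symplectic matrix on ℝ⁶ = ℝ³ × ℝ³. Then the characteristic polynomial of JA is t⁴(t² + 2), hence σ(JA) ⊂ iℝ, n⁻(A) = 3 is odd, and the generalized kernel ker((JA)⁶) is 4-dimensional and spanned by e₂, e₃, e₅, e₆, with n⁻(A restricted to ker((JA)⁶)) = 1. -/
open Matrix Polynomial

@[simp] lemma cons_val_five' {α : Type*} {m : ℕ} (x : α) (u : Fin (m + 5) → α) :
    Matrix.vecCons x u 5
      = Matrix.vecHead (Matrix.vecTail (Matrix.vecTail (Matrix.vecTail (Matrix.vecTail u)))) :=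
  rfl

lemma spectrum_eval' {n : Type*} [Fintype n] [DecidableEq n] {M : Matrix n n ℂ} {μ : ℂ}
    (h : μ ∈ spectrum ℂ M) : M.charpoly.eval μ = 0 := by
  rw [spectrum.mem_iff, Matrix.isUnit_iff_isUnit_det, isUnit_iff_ne_zero, not_not] at h
  rw [Matrix.charpoly, eval_det, Matrix.matPolyEquiv_charmatrix]
  simpa [Matrix.algebraMap_eq_diagonal, Pi.algebraMap_def] using h

lemma li_single' {k : ℕ} (v : Fin k → Fin 6) (hv : Function.Injective v) :
    LinearIndependent ℝ (fun i => (Pi.single (v i) 1 : Fin 6 → ℝ)) := by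
  have h := ((Pi.basisFun ℝ (Fin 6)).linearIndependent.comp v hv)
  have e : (fun i => (Pi.single (v i) 1 : Fin 6 → ℝ)) = ⇑(Pi.basisFun ℝ (Fin 6)) ∘ v := by
    funext i; simp [Function.comp, Pi.basisFun_apply]
  rw [e]; exact h

lemma inf_ne_bot' (W U : Submodule ℝ (Fin 6 → ℝ)) (N : ℕ)
    (hsup : Module.finrank ℝ ↥(W ⊔ U) ≤ N)
    (h : N < Module.finrank ℝ W + Module.finrank ℝ U) :
    ∃ x, x ∈ W ∧ x ∈ U ∧ x ≠ 0 := by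
  have key := Submodule.finrank_sup_add_finrank_inf_eq W U
  have hpos : 0 < Module.finrank ℝ ↥(W ⊓ U) := by omega
  obtain ⟨x, hx, hx0⟩ := (Submodule.ne_bot_iff (W ⊓ U)).mp (by
    intro hb
    rw [hb, finrank_bot] at hpos
    simp at hpos)
  exact ⟨x, hx.1, hx.2, hx0⟩

set_option maxHeartbeats 4000000 in
set_option maxRecDepth 20000 in
/-- For `A = diag(−2,−1,1,−1,0,0)` and the standard symplectic `J` on `ℝ⁶`, the
characteristic polynomial of `JA` is `t⁴(t² + 2)`, hence `σ(JA) ⊂ iℝ`; `n⁻(A) = 3` is odd;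
the generalized kernel `ker((JA)⁶)` is `4`-dimensional, spanned by `e₂,e₃,e₅,e₆`; and
`n⁻(A|_{ker((JA)⁶)}) = 1`. -/
theorem stmt18 (A J : Matrix (Fin 6) (Fin 6) ℝ)
    (hA : A = Matrix.diagonal ![-2, -1, 1, -1, 0, 0])
    (hJ : J = !![0,0,0,-1,0,0;
                 0,0,0,0,-1,0;
                 0,0,0,0,0,-1;
                 1,0,0,0,0,0;
                 0,1,0,0,0,0;
                 0,0,1,0,0,0]) :
    (J * A).charpoly = X ^ 4 * (X ^ 2 + C 2) ∧
    (∀ μ ∈ spectrum ℂ ((J * A).map (algebraMap ℝ ℂ)), μ.re = 0) ∧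
    negIdx A = 3 ∧ Odd (negIdx A) ∧
    LinearMap.ker (Matrix.toLin' ((J * A) ^ 6))
      = Submodule.span ℝ {Pi.single 1 1, Pi.single 2 1, Pi.single 4 1, Pi.single 5 1} ∧
    Module.finrank ℝ (LinearMap.ker (Matrix.toLin' ((J * A) ^ 6))) = 4 ∧
    negIdxOn A (LinearMap.ker (Matrix.toLin' ((J * A) ^ 6))) = 1 := by
  -- the explicit form of J*A
  have hJA : J * A = !![0,0,0,1,0,0;0,0,0,0,0,0;0,0,0,0,0,0;-2,0,0,0,0,0;0,-1,0,0,0,0;0,0,1,0,0,0] := by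
    rw [hA, hJ]
    ext i j
    fin_cases i <;> fin_cases j <;>
      simp [Matrix.mul_apply, Fin.sum_univ_succ, Matrix.diagonal_apply]
  -- the characteristic polynomial
  have hchar : (J * A).charpoly = X ^ 4 * (X ^ 2 + C 2) := by
    rw [hJA]
    have h : charmatrix (!![(0:ℝ),0,0,1,0,0;0,0,0,0,0,0;0,0,0,0,0,0;-2,0,0,0,0,0;0,-1,0,0,0,0;0,0,1,0,0,0]) =
        !![X,0,0,-1,0,0; 0,X,0,0,0,0; 0,0,X,0,0,0; 2,0,0,X,0,0; 0,1,0,0,X,0; 0,0,-1,0,0,X] := by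
      refine Matrix.ext fun i j => ?_
      fin_cases i <;> fin_cases j <;>
        simp [charmatrix_apply, Matrix.vecHead, Matrix.vecTail, Function.comp] <;>
        norm_num [map_ofNat]
    rw [Matrix.charpoly, h]
    simp [Matrix.det_succ_row_zero, Fin.sum_univ_succ, Matrix.vecHead, Matrix.vecTail]
    norm_num [Fin.succAbove, Fin.lt_def, Fin.castSucc, Fin.castAdd, Fin.castLE,
      Matrix.vecHead, Matrix.vecTail, map_ofNat]
    simp [Matrix.cons_val]
    ring
  -- the sixth power
  have h6 : (J * A) ^ 6 = Matrix.diagonal ![-8,0,0,-8,0,0] := by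
    have h2 : (J * A) ^ 2 = Matrix.diagonal ![-2,0,0,-2,0,0] := by
      rw [pow_two, hJA]
      ext i j
      fin_cases i <;> fin_cases j <;>
        norm_num [Matrix.mul_apply, Fin.sum_univ_succ, Matrix.diagonal_apply, Fin.ext_iff,
          Matrix.vecHead, Matrix.vecTail]
    have h63 : (J * A) ^ 6 = ((J * A) ^ 2) ^ 3 := by rw [← pow_mul]
    rw [h63, h2, show (3:ℕ) = 2 + 1 by rfl, pow_succ, pow_two, Matrix.diagonal_mul_diagonal,
      Matrix.diagonal_mul_diagonal]
    ext i j
    fin_cases i <;> fin_cases j <;>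
      norm_num [Matrix.diagonal_apply, Fin.ext_iff, Matrix.vecHead, Matrix.vecTail] <;> decide
  -- the quadratic form
  have hq : ∀ x : Fin 6 → ℝ,
      x ⬝ᵥ A.mulVec x = -2*(x 0)^2 - (x 1)^2 + (x 2)^2 - (x 3)^2 := by
    intro x
    rw [hA]
    simp [dotProduct, Matrix.mulVec_diagonal, Fin.sum_univ_six, Matrix.vecHead, Matrix.vecTail]
    ring
  -- the nonnegative subspace spanned by e₂, e₄, e₅
  set U : Submodule ℝ (Fin 6 → ℝ) :=
    Submodule.span ℝ (Set.range fun i : Fin 3 => (Pi.single (![2,4,5] i) 1 : Fin 6 → ℝ)) with hU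
  have hUr : Module.finrank ℝ U = 3 := by
    rw [hU, finrank_span_eq_card (li_single' ![2,4,5] (by decide))]
    simp
  have hU0 : ∀ x ∈ U, 0 ≤ x ⬝ᵥ A.mulVec x := by
    intro x hx
    obtain ⟨c, hc⟩ := (Submodule.mem_span_range_iff_exists_fun ℝ).mp hx
    have h0 : x 0 = 0 := by rw [← hc]; simp [Fin.sum_univ_three, Pi.single_apply]
    have h1 : x 1 = 0 := by rw [← hc]; simp [Fin.sum_univ_three, Pi.single_apply]
    have h3 : x 3 = 0 := by rw [← hc]; simp [Fin.sum_univ_three, Pi.single_apply]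
    rw [hq, h0, h1, h3]
    nlinarith [sq_nonneg (x 2)]
  -- kernel membership criterion
  have hkmem : ∀ x : Fin 6 → ℝ,
      x ∈ LinearMap.ker (Matrix.toLin' ((J * A) ^ 6)) ↔ (x 0 = 0 ∧ x 3 = 0) := by
    intro x
    rw [LinearMap.mem_ker, Matrix.toLin'_apply, h6]
    constructor
    · intro h
      have h0 := congrFun h 0
      have h3 := congrFun h 3
      simp [Matrix.mulVec_diagonal] at h0 h3
      norm_num [Matrix.vecHead, Matrix.vecTail] at h0 h3
      exact ⟨h0, h3⟩
    · rintro ⟨h0, h3⟩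
      funext i
      fin_cases i <;>
        simp [Matrix.mulVec_diagonal, h0, h3, Matrix.vecHead, Matrix.vecTail]
  -- kernel equals span
  have hker : LinearMap.ker (Matrix.toLin' ((J * A) ^ 6))
      = Submodule.span ℝ {Pi.single 1 1, Pi.single 2 1, Pi.single 4 1, Pi.single 5 1} := by
    apply le_antisymm
    · intro x hx
      obtain ⟨h0, h3⟩ := (hkmem x).mp hx
      have hx' : x = x 1 • (Pi.single 1 1 : Fin 6 → ℝ) + x 2 • (Pi.single 2 1 : Fin 6 → ℝ)
          + x 4 • (Pi.single 4 1 : Fin 6 → ℝ) + x 5 • (Pi.single 5 1 : Fin 6 → ℝ) := by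
        funext i
        fin_cases i <;> simp [Pi.single_apply, h0, h3]
      rw [hx']
      have m1 : (Pi.single 1 1 : Fin 6 → ℝ) ∈ ({Pi.single 1 1, Pi.single 2 1,
          Pi.single 4 1, Pi.single 5 1} : Set (Fin 6 → ℝ)) := by simp
      have m2 : (Pi.single 2 1 : Fin 6 → ℝ) ∈ ({Pi.single 1 1, Pi.single 2 1,
          Pi.single 4 1, Pi.single 5 1} : Set (Fin 6 → ℝ)) := by simp
      have m4 : (Pi.single 4 1 : Fin 6 → ℝ) ∈ ({Pi.single 1 1, Pi.single 2 1,
          Pi.single 4 1, Pi.single 5 1} : Set (Fin 6 → ℝ)) := by simp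
      have m5 : (Pi.single 5 1 : Fin 6 → ℝ) ∈ ({Pi.single 1 1, Pi.single 2 1,
          Pi.single 4 1, Pi.single 5 1} : Set (Fin 6 → ℝ)) := by simp
      exact Submodule.add_mem _ (Submodule.add_mem _ (Submodule.add_mem _
        (Submodule.smul_mem _ _ (Submodule.subset_span m1))
        (Submodule.smul_mem _ _ (Submodule.subset_span m2)))
        (Submodule.smul_mem _ _ (Submodule.subset_span m4)))
        (Submodule.smul_mem _ _ (Submodule.subset_span m5))
    · rw [Submodule.span_le]
      rintro y (rfl | rfl | rfl | rfl) <;>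
        rw [SetLike.mem_coe, hkmem] <;>
        constructor <;> simp [Pi.single_apply]
  -- finrank of the kernel
  have hsets : (Set.range fun i : Fin 4 => (Pi.single (![1,2,4,5] i) 1 : Fin 6 → ℝ))
      = {Pi.single 1 1, Pi.single 2 1, Pi.single 4 1, Pi.single 5 1} := by
    ext y
    constructor
    · rintro ⟨i, rfl⟩
      fin_cases i <;> simp
    · rintro (rfl | rfl | rfl | rfl)
      · exact ⟨0, by simp⟩
      · exact ⟨1, by simp⟩
      · exact ⟨2, by simp⟩
      · exact ⟨3, by simp⟩
  have hfr : Module.finrank ℝ (LinearMap.ker (Matrix.toLin' ((J * A) ^ 6))) = 4 := by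
    rw [hker, ← hsets, finrank_span_eq_card (li_single' ![1,2,4,5] (by decide))]
    simp
  -- negIdx A = 3
  have hino : negIdx A = 3 := by
    have hub : ∀ d ∈ {d | ∃ W : Submodule ℝ (Fin 6 → ℝ), Module.finrank ℝ W = d ∧
        ∀ x ∈ W, x ≠ 0 → x ⬝ᵥ A.mulVec x < 0}, d ≤ 3 := by
      rintro d ⟨W, hWr, hWneg⟩
      by_contra hlt
      push_neg at hlt
      obtain ⟨x, hxW, hxU, hx0⟩ := inf_ne_bot' W U 6 (by simpa using Submodule.finrank_le (W ⊔ U)) (by omega)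
      have := hWneg x hxW hx0
      have := hU0 x hxU
      linarith
    have hmem : 3 ∈ {d | ∃ W : Submodule ℝ (Fin 6 → ℝ), Module.finrank ℝ W = d ∧
        ∀ x ∈ W, x ≠ 0 → x ⬝ᵥ A.mulVec x < 0} := by
      refine ⟨Submodule.span ℝ (Set.range fun i : Fin 3 =>
        (Pi.single (![0,1,3] i) 1 : Fin 6 → ℝ)), ?_, ?_⟩
      · rw [finrank_span_eq_card (li_single' ![0,1,3] (by decide))]; simp
      · intro x hx hx0
        obtain ⟨c, hc⟩ := (Submodule.mem_span_range_iff_exists_fun ℝ).mp hx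
        have e0 : x 0 = c 0 := by rw [← hc]; simp [Fin.sum_univ_three, Pi.single_apply]
        have e1 : x 1 = c 1 := by rw [← hc]; simp [Fin.sum_univ_three, Pi.single_apply]
        have e2 : x 2 = 0 := by rw [← hc]; simp [Fin.sum_univ_three, Pi.single_apply]
        have e3 : x 3 = c 2 := by rw [← hc]; simp [Fin.sum_univ_three, Pi.single_apply]
        rw [hq, e0, e1, e2, e3]
        by_contra hge
        push_neg at hge
        have hc0 : c 0 = 0 := by
          have : (c 0)^2 = 0 := le_antisymm (by nlinarith [sq_nonneg (c 1), sq_nonneg (c 2)]) (sq_nonneg _)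
          exact pow_eq_zero_iff (by norm_num) |>.mp this
        have hc1 : c 1 = 0 := by
          have : (c 1)^2 = 0 := le_antisymm (by nlinarith [sq_nonneg (c 0), sq_nonneg (c 2)]) (sq_nonneg _)
          exact pow_eq_zero_iff (by norm_num) |>.mp this
        have hc2 : c 2 = 0 := by
          have : (c 2)^2 = 0 := le_antisymm (by nlinarith [sq_nonneg (c 0), sq_nonneg (c 1)]) (sq_nonneg _)
          exact pow_eq_zero_iff (by norm_num) |>.mp this
        apply hx0
        rw [← hc]
        simp [hc0, hc1, hc2, Fin.sum_univ_three]
    exact le_antisymm (csSup_le ⟨3, hmem⟩ hub) (le_csSup ⟨3, hub⟩ hmem)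
  -- negIdxOn
  have hinoOn : negIdxOn A (LinearMap.ker (Matrix.toLin' ((J * A) ^ 6))) = 1 := by
    set V := LinearMap.ker (Matrix.toLin' ((J * A) ^ 6)) with hV
    have hUV : U ≤ V := by
      rw [hU, Submodule.span_le]
      rintro y ⟨i, rfl⟩
      rw [SetLike.mem_coe, hkmem]
      fin_cases i <;> constructor <;> simp [Pi.single_apply]
    have hub : ∀ d ∈ {d | ∃ W : Submodule ℝ (Fin 6 → ℝ), W ≤ V ∧ Module.finrank ℝ W = d ∧
        ∀ x ∈ W, x ≠ 0 → x ⬝ᵥ A.mulVec x < 0}, d ≤ 1 := by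
      rintro d ⟨W, hWV, hWr, hWneg⟩
      by_contra hlt
      push_neg at hlt
      have hsup : Module.finrank ℝ ↥(W ⊔ U) ≤ 4 := by
        have h1 : W ⊔ U ≤ V := sup_le hWV hUV
        calc Module.finrank ℝ ↥(W ⊔ U) ≤ Module.finrank ℝ V := Submodule.finrank_mono h1
          _ = 4 := hfr
      obtain ⟨x, hxW, hxU, hx0⟩ := inf_ne_bot' W U 4 hsup (by omega)
      have := hWneg x hxW hx0
      have := hU0 x hxU
      linarith
    have hmem : 1 ∈ {d | ∃ W : Submodule ℝ (Fin 6 → ℝ), W ≤ V ∧ Module.finrank ℝ W = d ∧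
        ∀ x ∈ W, x ≠ 0 → x ⬝ᵥ A.mulVec x < 0} := by
      refine ⟨Submodule.span ℝ (Set.range fun i : Fin 1 =>
        (Pi.single (![1] i) 1 : Fin 6 → ℝ)), ?_, ?_, ?_⟩
      · rw [Submodule.span_le]
        rintro y ⟨i, rfl⟩
        rw [SetLike.mem_coe, hkmem]
        fin_cases i <;> constructor <;> simp [Pi.single_apply]
      · rw [finrank_span_eq_card (li_single' ![1] (by decide))]; simp
      · intro x hx hx0
        obtain ⟨c, hc⟩ := (Submodule.mem_span_range_iff_exists_fun ℝ).mp hx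
        have e0 : x 0 = 0 := by rw [← hc]; simp [Pi.single_apply]
        have e1 : x 1 = c 0 := by rw [← hc]; simp [Pi.single_apply]
        have e2 : x 2 = 0 := by rw [← hc]; simp [Pi.single_apply]
        have e3 : x 3 = 0 := by rw [← hc]; simp [Pi.single_apply]
        have hc0 : c 0 ≠ 0 := by
          intro h
          apply hx0
          rw [← hc]
          simp [h]
        rw [hq, e0, e1, e2, e3]
        have : 0 < (c 0)^2 := by positivity
        nlinarith
    exact le_antisymm (csSup_le ⟨1, hmem⟩ hub) (le_csSup ⟨1, hub⟩ hmem)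
  -- spectrum
  have hspec : ∀ μ ∈ spectrum ℂ ((J * A).map (algebraMap ℝ ℂ)), μ.re = 0 := by
    intro μ hμ
    have h0 := spectrum_eval' hμ
    rw [Matrix.charpoly_map, hchar] at h0
    have h0' : μ ^ 4 * (μ ^ 2 + 2) = 0 := by
      simpa [Polynomial.eval_map] using h0
    rcases mul_eq_zero.mp h0' with h | h
    · have : μ = 0 := by
        exact pow_eq_zero_iff (by norm_num) |>.mp h
      rw [this]; simp
    · have h2 : μ ^ 2 = -2 := by linear_combination h
      have hre : μ.re * μ.re - μ.im * μ.im = -2 := by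
        have := congrArg Complex.re h2
        simpa [pow_two, Complex.mul_re] using this
      have him : μ.re * μ.im + μ.im * μ.re = 0 := by
        have := congrArg Complex.im h2
        simpa [pow_two, Complex.mul_im] using this
      by_contra hne
      have him' : μ.im = 0 := by
        have : μ.re * μ.im = 0 := by linarith
        rcases mul_eq_zero.mp this with h' | h'
        · exact absurd h' hne
        · exact h'
      rw [him'] at hre
      nlinarith [sq_nonneg μ.re]
  exact ⟨hchar, hspec, hino, by rw [hino]; exact ⟨1, by norm_num⟩, hker, hfr, hinoOn⟩
end

section
/- Let T : [a,b] → Sym(H) be a continuous path of self-adjoint operators on a finite-dimensional Hilbert space such that dim ker T_t is constant on [a,b]. Then the spectral flow of T on [a,b] is zero, i.e. n⁻(T_a) = n⁻(T_b). -/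
open Matrix

/-- Morse index (number of negative eigenvalues counted with multiplicity) of a Hermitian
complex matrix. -/
noncomputable def negIdxC {n : ℕ} (A : Matrix (Fin n) (Fin n) ℂ) : ℕ :=
  sSup {d | ∃ W : Submodule ℂ (Fin n → ℂ), Module.finrank ℂ W = d ∧
    ∀ x ∈ W, x ≠ 0 → (star x ⬝ᵥ A.mulVec x).re < 0}

namespace SF

variable {n : ℕ}

/-- The quadratic form of a matrix. -/
noncomputable def qf (A : Matrix (Fin n) (Fin n) ℂ) (x : Fin n → ℂ) : ℝ :=
  (star x ⬝ᵥ A.mulVec x).re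

/-- The set of dimensions of negative subspaces of `A`. -/
def negSet (A : Matrix (Fin n) (Fin n) ℂ) : Set ℕ :=
  {d | ∃ W : Submodule ℂ (Fin n → ℂ), Module.finrank ℂ W = d ∧ ∀ x ∈ W, x ≠ 0 → qf A x < 0}

lemma negIdxC_eq (A : Matrix (Fin n) (Fin n) ℂ) : negIdxC A = sSup (negSet A) := rfl

/-- coordinate subspace of vectors vanishing on `P` -/
noncomputable def coordKer (P : Fin n → Prop) [DecidablePred P] : Submodule ℂ (Fin n → ℂ) :=
  LinearMap.ker (LinearMap.funLeft ℂ ℂ ((↑) : {i // P i} → Fin n))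

lemma mem_coordKer {P : Fin n → Prop} [DecidablePred P] {x : Fin n → ℂ} :
    x ∈ coordKer P ↔ ∀ i, P i → x i = 0 := by
  simp only [coordKer, LinearMap.mem_ker]
  rw [funext_iff]
  simp [LinearMap.funLeft_apply, Subtype.forall]

lemma finrank_coordKer (P : Fin n → Prop) [DecidablePred P] :
    Module.finrank ℂ (coordKer P) + Fintype.card {i // P i} = n := by
  have hs := LinearMap.funLeft_surjective_of_injective ℂ ℂ ((↑) : {i // P i} → Fin n)
    Subtype.val_injective
  have h2 := LinearMap.finrank_range_add_finrank_ker
    (LinearMap.funLeft ℂ ℂ ((↑) : {i // P i} → Fin n))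
  rw [LinearMap.range_eq_top.mpr hs, finrank_top, Module.finrank_pi ℂ] at h2
  rw [Module.finrank_pi ℂ, Fintype.card_fin] at h2
  rw [coordKer]
  omega

lemma zero_mem_negSet (A : Matrix (Fin n) (Fin n) ℂ) : 0 ∈ negSet A :=
  ⟨⊥, by simp, fun x hx hx0 => absurd (Submodule.mem_bot ℂ |>.mp hx) hx0⟩

lemma negSet_bddAbove (A : Matrix (Fin n) (Fin n) ℂ) : BddAbove (negSet A) := by
  refine ⟨n, ?_⟩
  rintro d ⟨W, hW, -⟩
  have := Submodule.finrank_le W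
  rwa [Module.finrank_pi ℂ, Fintype.card_fin, hW] at this

lemma negIdx_mem (A : Matrix (Fin n) (Fin n) ℂ) : sSup (negSet A) ∈ negSet A :=
  Nat.sSup_mem ⟨0, zero_mem_negSet A⟩ (negSet_bddAbove A)

lemma le_negIdx {A : Matrix (Fin n) (Fin n) ℂ} {d : ℕ} (h : d ∈ negSet A) :
    d ≤ sSup (negSet A) := le_csSup (negSet_bddAbove A) h

lemma negIdx_le {A : Matrix (Fin n) (Fin n) ℂ} {m : ℕ} (h : ∀ d ∈ negSet A, d ≤ m) :
    sSup (negSet A) ≤ m := csSup_le ⟨0, zero_mem_negSet A⟩ h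

lemma negSet_subset {A B : Matrix (Fin n) (Fin n) ℂ} (E : (Fin n → ℂ) ≃ₗ[ℂ] (Fin n → ℂ))
    (h : ∀ x, qf B (E x) = qf A x) : negSet A ⊆ negSet B := by
  rintro d ⟨W, hW, hneg⟩
  refine ⟨W.map (E : (Fin n → ℂ) →ₗ[ℂ] (Fin n → ℂ)), ?_, ?_⟩
  · rw [LinearEquiv.finrank_map_eq]; exact hW
  · rintro x hx hx0
    obtain ⟨y, hy, rfl⟩ := Submodule.mem_map.mp hx
    have hy0 : y ≠ 0 := by rintro rfl; simp at hx0
    simpa [h y] using hneg y hy hy0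

lemma negIdx_congr {A B : Matrix (Fin n) (Fin n) ℂ} (E : (Fin n → ℂ) ≃ₗ[ℂ] (Fin n → ℂ))
    (h : ∀ x, qf B (E x) = qf A x) : sSup (negSet A) = sSup (negSet B) := by
  have h2 : ∀ x, qf A (E.symm x) = qf B x := fun x => by
    conv_rhs => rw [← E.apply_symm_apply x, h]
  exact le_antisymm (negIdx_le fun d hd => le_negIdx (negSet_subset E h hd))
    (negIdx_le fun d hd => le_negIdx (negSet_subset E.symm h2 hd))

lemma qf_diagonal (d : Fin n → ℝ) (x : Fin n → ℂ) :
    qf (diagonal (fun i => (d i : ℂ))) x = ∑ i, d i * Complex.normSq (x i) := by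
  unfold qf
  rw [dotProduct, Complex.re_sum]
  refine Finset.sum_congr rfl fun i _ => ?_
  rw [mulVec_diagonal]
  simp only [Pi.star_apply, RCLike.star_def]
  have : (starRingEnd ℂ) (x i) * ((d i : ℂ) * x i) = ((d i : ℂ)) * ((Complex.normSq (x i) : ℂ)) := by
    rw [← Complex.mul_conj]
    ring
  rw [this, ← Complex.ofReal_mul, Complex.ofReal_re]

lemma tri_card (d : Fin n → ℝ) :
    Fintype.card {i // d i < 0} + Fintype.card {i // 0 < d i} + Fintype.card {i // d i = 0} = n := by
  classical
  simp only [Fintype.card_subtype]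
  have h1 := Finset.card_filter_add_card_filter_not (s := (Finset.univ : Finset (Fin n)))
    (fun i => d i < 0)
  have h2 := Finset.card_filter_add_card_filter_not
    (s := Finset.univ.filter fun i => ¬ d i < 0) (fun i => 0 < d i)
  rw [Finset.filter_filter, Finset.filter_filter] at h2
  have e1 : (Finset.univ.filter fun i => ¬ d i < 0 ∧ 0 < d i) =
      Finset.univ.filter fun i => 0 < d i := by
    apply Finset.filter_congr; intro i _; constructor
    · exact And.right
    · intro h; exact ⟨by linarith, h⟩
  have e2 : (Finset.univ.filter fun i => ¬ d i < 0 ∧ ¬ 0 < d i) =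
      Finset.univ.filter fun i => d i = 0 := by
    apply Finset.filter_congr; intro i _; constructor
    · rintro ⟨h1', h2'⟩; linarith
    · intro h; constructor <;> simp [h]
  rw [e1, e2] at h2
  rw [Finset.card_univ, Fintype.card_fin] at h1
  omega

lemma negIdx_diagonal (d : Fin n → ℝ) :
    sSup (negSet (diagonal (fun i => (d i : ℂ)))) = Fintype.card {i // d i < 0} := by
  classical
  apply le_antisymm
  · apply negIdx_le
    rintro m ⟨W, hW, hneg⟩
    have hdisj : W ⊓ coordKer (fun i => d i < 0) = ⊥ := by
      rw [Submodule.eq_bot_iff]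
      rintro x ⟨hx1, hx2⟩
      by_contra h0
      have h1 := hneg x hx1 h0
      have h2 : 0 ≤ qf (diagonal (fun i => (d i : ℂ))) x := by
        rw [qf_diagonal]
        apply Finset.sum_nonneg
        intro i _
        by_cases hi : d i < 0
        · rw [mem_coordKer.mp hx2 i hi]; simp
        · exact mul_nonneg (not_lt.mp hi) (Complex.normSq_nonneg _)
      linarith
    have hsum := Submodule.finrank_sup_add_finrank_inf_eq W (coordKer fun i => d i < 0)
    rw [hdisj, finrank_bot, add_zero] at hsum
    have hle : Module.finrank ℂ ↥(W ⊔ coordKer fun i => d i < 0) ≤ n := by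
      have := Submodule.finrank_le (W ⊔ coordKer fun i => d i < 0)
      rwa [Module.finrank_pi ℂ, Fintype.card_fin] at this
    have hck := finrank_coordKer (fun i => d i < 0)
    have hcard : Fintype.card {i // d i < 0} ≤ n := by
      have := Fintype.card_subtype_le (fun i : Fin n => d i < 0)
      rwa [Fintype.card_fin] at this
    omega
  · apply le_negIdx
    refine ⟨coordKer (fun i => ¬ d i < 0), ?_, ?_⟩
    · have h1 := finrank_coordKer (fun i => ¬ d i < 0)
      have h2 : Fintype.card {i // ¬ d i < 0} + Fintype.card {i // d i < 0} = n := by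
        rw [Fintype.card_subtype_compl]
        have := Fintype.card_subtype_le (fun i : Fin n => d i < 0)
        rw [Fintype.card_fin] at this ⊢
        omega
      omega
    · intro x hx h0
      rw [qf_diagonal]
      obtain ⟨i0, hi0⟩ : ∃ i, x i ≠ 0 := by
        by_contra h
        push_neg at h
        exact h0 (funext h)
      have hi0S : d i0 < 0 := by
        by_contra h
        exact hi0 (mem_coordKer.mp hx i0 h)
      have := Finset.sum_lt_sum (s := Finset.univ)
        (f := fun i => d i * Complex.normSq (x i)) (g := fun _ => (0:ℝ))
        (fun i _ => by
          show d i * Complex.normSq (x i) ≤ 0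
          by_cases hi : d i < 0
          · exact mul_nonpos_of_nonpos_of_nonneg hi.le (Complex.normSq_nonneg _)
          · rw [mem_coordKer.mp hx i hi]; simp)
        ⟨i0, Finset.mem_univ _, by
          show d i0 * Complex.normSq (x i0) < 0
          have : 0 < Complex.normSq (x i0) := Complex.normSq_pos.mpr hi0
          nlinarith⟩
      simpa using this

lemma finrank_ker_diagonal (d : Fin n → ℝ) :
    Module.finrank ℂ (LinearMap.ker (Matrix.toLin' (diagonal (fun i => (d i : ℂ))))) =
      Fintype.card {i // d i = 0} := by
  classical
  have hker : LinearMap.ker (Matrix.toLin' (diagonal (fun i => (d i : ℂ)))) =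
      coordKer (fun i => ¬ d i = 0) := by
    ext x
    rw [LinearMap.mem_ker, mem_coordKer]
    rw [Matrix.toLin'_apply, funext_iff]
    constructor
    · intro h i hi
      have := h i
      rw [mulVec_diagonal] at this
      simp only [Pi.zero_apply, mul_eq_zero] at this
      rcases this with h' | h'
      · exact absurd (by exact_mod_cast h') hi
      · exact h'
    · intro h i
      rw [mulVec_diagonal]
      by_cases hi : d i = 0
      · simp [hi]
      · simp [h i hi]
  rw [hker]
  have h1 := finrank_coordKer (fun i => ¬ d i = 0)
  have h2 : Fintype.card {i // ¬ d i = 0} + Fintype.card {i // d i = 0} = n := by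
    rw [Fintype.card_subtype_compl]
    have := Fintype.card_subtype_le (fun i : Fin n => d i = 0)
    rw [Fintype.card_fin] at this ⊢
    omega
  omega

lemma qf_neg (A : Matrix (Fin n) (Fin n) ℂ) (x : Fin n → ℂ) : qf (-A) x = - qf A x := by
  unfold qf
  rw [Matrix.neg_mulVec, dotProduct_neg, Complex.neg_re]

/-- The key inertia identity: for a Hermitian matrix, the number of negative eigenvalues plus
the number of positive eigenvalues plus the nullity equals the dimension. -/
lemma key (A : Matrix (Fin n) (Fin n) ℂ) (hA : A.IsHermitian) :
    sSup (negSet A) + sSup (negSet (-A)) +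
      Module.finrank ℂ (LinearMap.ker (Matrix.toLin' A)) = n := by
  set d : Fin n → ℝ := hA.eigenvalues with hd
  set U : Matrix (Fin n) (Fin n) ℂ := (hA.eigenvectorUnitary : Matrix (Fin n) (Fin n) ℂ) with hU
  have h1 : star U * U = 1 := Matrix.mem_unitaryGroup_iff'.mp hA.eigenvectorUnitary.2
  have h2 : U * star U = 1 := Matrix.mem_unitaryGroup_iff.mp hA.eigenvectorUnitary.2
  have hcomp1 : (Matrix.toLin' (star U)).comp (Matrix.toLin' U) = LinearMap.id := by
    rw [← Matrix.toLin'_mul, h1, Matrix.toLin'_one]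
  have hcomp2 : (Matrix.toLin' U).comp (Matrix.toLin' (star U)) = LinearMap.id := by
    rw [← Matrix.toLin'_mul, h2, Matrix.toLin'_one]
  set E : (Fin n → ℂ) ≃ₗ[ℂ] (Fin n → ℂ) :=
    LinearEquiv.ofLinear (Matrix.toLin' (star U)) (Matrix.toLin' U) hcomp1 hcomp2 with hEdef
  have hE : ∀ x, E x = star U *ᵥ x := fun x => Matrix.toLin'_apply _ _
  set D : Matrix (Fin n) (Fin n) ℂ := diagonal (fun i => (d i : ℂ)) with hD
  have hspec : A = U * D * star U := hA.spectral_theorem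
  have hqf : ∀ x, qf D (E x) = qf A x := by
    intro x
    unfold qf
    conv_rhs => rw [hspec]
    rw [hE, ← mulVec_mulVec, ← mulVec_mulVec, Matrix.dotProduct_mulVec (star x) U,
      Matrix.star_mulVec, Matrix.star_eq_conjTranspose, Matrix.conjTranspose_conjTranspose]
  have e1 : sSup (negSet A) = Fintype.card {i // d i < 0} :=
    (negIdx_congr E hqf).trans (negIdx_diagonal d)
  have hfun : (fun i => (((-d) i : ℝ) : ℂ)) = -(fun i => ((d i : ℝ) : ℂ)) := by
    funext i
    simp
  have hDneg : diagonal (fun i => (((-d) i : ℝ) : ℂ)) = -D := by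
    ext i j
    rcases eq_or_ne i j with rfl | h
    · simp [hD]
    · simp [hD, Matrix.diagonal_apply_ne _ h]
  have hqf2 : ∀ x, qf (-D) (E x) = qf (-A) x := by
    intro x
    rw [qf_neg, qf_neg, hqf]
  have e2' : sSup (negSet (-D)) = Fintype.card {i // (-d) i < 0} := by
    rw [← hDneg]
    exact negIdx_diagonal (-d)
  have e2 : sSup (negSet (-A)) = Fintype.card {i // 0 < d i} := by
    rw [(negIdx_congr E hqf2), e2']
    apply Fintype.card_congr
    exact Equiv.subtypeEquivRight fun i => by simp
  have hUinj : ∀ z : Fin n → ℂ, U *ᵥ z = 0 → z = 0 := by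
    intro z hz
    have : (star U * U) *ᵥ z = 0 := by rw [← mulVec_mulVec, hz, Matrix.mulVec_zero]
    rwa [h1, Matrix.one_mulVec] at this
  have hAx : ∀ x, A *ᵥ x = U *ᵥ (D *ᵥ (star U *ᵥ x)) := by
    intro x
    rw [mulVec_mulVec, mulVec_mulVec, ← hspec]
  have hkerE : LinearMap.ker (Matrix.toLin' A) =
      Submodule.comap (E : (Fin n → ℂ) →ₗ[ℂ] (Fin n → ℂ)) (LinearMap.ker (Matrix.toLin' D)) := by
    ext x
    simp only [LinearMap.mem_ker, Submodule.mem_comap, Matrix.toLin'_apply,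
      LinearEquiv.coe_coe]
    rw [hE]
    constructor
    · intro hx
      apply hUinj
      rw [← hAx]
      exact hx
    · intro hx
      rw [hAx, hx, Matrix.mulVec_zero]
  have e3 : Module.finrank ℂ (LinearMap.ker (Matrix.toLin' A)) = Fintype.card {i // d i = 0} := by
    rw [hkerE, Submodule.comap_equiv_eq_map_symm, LinearEquiv.finrank_map_eq]
    exact finrank_ker_diagonal d
  rw [e1, e2, e3]
  exact tri_card d

lemma qf_continuous :
    Continuous (fun p : Matrix (Fin n) (Fin n) ℂ × (Fin n → ℂ) => qf p.1 p.2) := by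
  unfold qf
  apply Complex.continuous_re.comp
  simp only [dotProduct, Matrix.mulVec, dotProduct, Pi.star_apply]
  apply continuous_finset_sum
  intro i _
  apply Continuous.mul
  · exact ((continuous_apply i).comp continuous_snd).star
  · apply continuous_finset_sum
    intro j _
    exact (((continuous_apply j).comp ((continuous_apply i).comp continuous_fst)).mul
      ((continuous_apply j).comp continuous_snd))

lemma qf_smul (B : Matrix (Fin n) (Fin n) ℂ) (x : Fin n → ℂ) (r : ℝ) :
    qf B ((r : ℂ) • x) = r ^ 2 * qf B x := by
  unfold qf
  rw [Matrix.mulVec_smul, star_smul, smul_dotProduct, dotProduct_smul]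
  simp only [smul_eq_mul, RCLike.star_def, Complex.conj_ofReal, ← mul_assoc,
    ← Complex.ofReal_mul, ← sq]
  rw [← Complex.ofReal_pow, Complex.re_ofReal_mul]

/-- Lower semicontinuity of the Morse index. -/
lemma eventually_le_negIdx (A : Matrix (Fin n) (Fin n) ℂ) :
    ∀ᶠ B in nhds A, sSup (negSet A) ≤ sSup (negSet B) := by
  obtain ⟨W, hW, hneg⟩ := negIdx_mem A
  set K : Set (Fin n → ℂ) := Metric.sphere 0 1 ∩ W with hK
  have hKc : IsCompact K :=
    (isCompact_sphere (0 : Fin n → ℂ) 1).inter_right W.closed_of_finiteDimensional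
  have hmemK : ∀ x ∈ K, x ∈ W ∧ ‖x‖ = 1 := by
    intro x hx
    exact ⟨hx.2, by simpa using mem_sphere_zero_iff_norm.mp hx.1⟩
  have hev : ∀ᶠ B in nhds A, ∀ x ∈ K, qf B x < 0 := by
    apply hKc.eventually_forall_of_forall_eventually
    intro y hy
    have hy' := hmemK y hy
    have hy0 : y ≠ 0 := fun h => by simp [h] at hy'
    have hlt : qf A y < 0 := hneg y hy'.1 hy0
    have hopen : IsOpen {z : Matrix (Fin n) (Fin n) ℂ × (Fin n → ℂ) | qf z.1 z.2 < 0} :=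
      isOpen_lt qf_continuous continuous_const
    exact hopen.mem_nhds hlt
  filter_upwards [hev] with B hB
  apply le_negIdx
  refine ⟨W, hW, fun x hx h0 => ?_⟩
  have hxn : ‖x‖ ≠ 0 := norm_ne_zero_iff.mpr h0
  set u : Fin n → ℂ := ((‖x‖⁻¹ : ℝ) : ℂ) • x with hu
  have huW : u ∈ W := W.smul_mem _ hx
  have hun : ‖u‖ = 1 := by
    rw [hu, norm_smul]
    simp [hxn, norm_inv]
  have huK : u ∈ K := ⟨mem_sphere_zero_iff_norm.mpr hun, huW⟩
  have h1 : qf B u < 0 := hB u huK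
  have h2 : qf B u = (‖x‖⁻¹) ^ 2 * qf B x := qf_smul B x _
  have h3 : (0:ℝ) < (‖x‖⁻¹) ^ 2 := by positivity
  nlinarith

end SF

/-- If `T : [a,b] → Sym(H)` is a continuous path of self-adjoint operators on a
finite-dimensional Hilbert space with `dim ker T_t` constant, then the spectral flow of `T`
on `[a,b]` vanishes, i.e. `n⁻(T_a) = n⁻(T_b)`. -/
theorem stmt19 (N : ℕ) (a b : ℝ) (hab : a ≤ b)
    (T : ℝ → Matrix (Fin N) (Fin N) ℂ)
    (hcont : ContinuousOn T (Set.Icc a b))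
    (hherm : ∀ t ∈ Set.Icc a b, (T t).IsHermitian)
    (c : ℕ)
    (hker : ∀ t ∈ Set.Icc a b,
      Module.finrank ℂ (LinearMap.ker (Matrix.toLin' (T t))) = c) :
    negIdxC (T a) = negIdxC (T b) := by
  have hkey : ∀ t ∈ Set.Icc a b,
      sSup (SF.negSet (T t)) + sSup (SF.negSet (-(T t))) + c = N := by
    intro t ht
    have := SF.key (T t) (hherm t ht)
    rwa [hker t ht] at this
  set g : ℝ → ℕ := fun t => sSup (SF.negSet (T t)) with hg
  have hloc : ∀ t₀ ∈ Set.Icc a b, ∀ᶠ t in nhdsWithin t₀ (Set.Icc a b), g t = g t₀ := by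
    intro t₀ ht₀
    have h1 : Filter.Tendsto T (nhdsWithin t₀ (Set.Icc a b)) (nhds (T t₀)) := hcont t₀ ht₀
    have h2 := h1.eventually (SF.eventually_le_negIdx (T t₀))
    have h1' : Filter.Tendsto (fun t => -(T t)) (nhdsWithin t₀ (Set.Icc a b))
        (nhds (-(T t₀))) := h1.neg
    have h3 := h1'.eventually (SF.eventually_le_negIdx (-(T t₀)))
    filter_upwards [h2, h3, self_mem_nhdsWithin] with t hle1 hle2 hmem
    have k1 := hkey t hmem
    have k2 := hkey t₀ ht₀
    show sSup (SF.negSet (T t)) = sSup (SF.negSet (T t₀))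
    omega
  have hcg : ContinuousOn g (Set.Icc a b) := by
    intro t ht
    exact Filter.Tendsto.congr' ((hloc t ht).mono fun s hs => hs.symm) tendsto_const_nhds
  have hpc : IsPreconnected (g '' Set.Icc a b) := isPreconnected_Icc.image g hcg
  have hsub : (g '' Set.Icc a b).Subsingleton := hpc.subsingleton
  have := hsub (Set.mem_image_of_mem g (Set.left_mem_Icc.mpr hab))
    (Set.mem_image_of_mem g (Set.right_mem_Icc.mpr hab))
  rw [SF.negIdxC_eq, SF.negIdxC_eq]
  exact this
end
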